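/- arXiv:1901.00434 — 11 statements merged into one kernel-verified Lean document; each statement's English description precedes it below -/
import Mathlib

section
/- For any real numbers x_1, ..., x_L > 0 with L ≥ 2, the square of their sum satisfies (x_1 + ... + x_L)^2 ≥ 4 · ∑_{k=1}^{L-1} x_k x_{k+1}. -/
theorem stmt0 (L : ℕ) (hL : 2 ≤ L) (x : ℕ → ℝ) (hx : ∀ k < L, 0 < x k) :
    4 * ∑ k ∈ Finset.range (L - 1), x k * x (k + 1) ≤ (∑ k ∈ Finset.range L, x k) ^ 2 := by
  classical
  set E := (Finset.range L).filter (fun k => Even k) with hE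
  set O := (Finset.range L).filter (fun k => ¬ Even k) with hO
  set A := ∑ k ∈ E, x k with hA
  set B := ∑ k ∈ O, x k with hB
  have hAB : A + B = ∑ k ∈ Finset.range L, x k := Finset.sum_filter_add_sum_filter_not _ _ _
  -- the map sending k to the (even, odd) ordered pair of {k, k+1}
  set g : ℕ → ℕ × ℕ := fun k => if Even k then (k, k + 1) else (k + 1, k) with hg
  have hmin : ∀ k, min (g k).1 (g k).2 = k := by
    intro k
    by_cases h : Even k <;> simp [hg, h, Nat.min_def]
  have hginj : Set.InjOn g (Finset.range (L - 1)) := by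
    intro a _ b _ hab
    have := hmin a
    rw [hab, hmin b] at this
    exact this.symm
  have hsub : (Finset.range (L - 1)).image g ⊆ E ×ˢ O := by
    intro p hp
    simp only [Finset.mem_image] at hp
    obtain ⟨k, hk, rfl⟩ := hp
    simp only [Finset.mem_range] at hk
    rw [Nat.lt_iff_add_one_le] at hk
    by_cases h : Even k
    · rw [hg]
      simp only [if_pos h]
      rw [Nat.even_iff] at h
      simp [hE, hO, Finset.mem_product, Finset.mem_filter, Finset.mem_range, Nat.even_iff, Nat.odd_iff]
      omega
    · rw [hg]
      simp only [if_neg h]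
      rw [Nat.even_iff] at h
      simp [hE, hO, Finset.mem_product, Finset.mem_filter, Finset.mem_range, Nat.even_iff, Nat.odd_iff]
      omega
  have key : ∑ k ∈ Finset.range (L - 1), x k * x (k + 1) ≤ A * B := by
    have h1 : ∑ k ∈ Finset.range (L - 1), x k * x (k + 1)
        = ∑ p ∈ (Finset.range (L - 1)).image g, x p.1 * x p.2 := by
      rw [Finset.sum_image (fun a ha b hb h => hginj ha hb h)]
      apply Finset.sum_congr rfl
      intro k _
      by_cases h : Even k <;> simp [hg, h, mul_comm]
    have h2 : A * B = ∑ p ∈ E ×ˢ O, x p.1 * x p.2 := by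
      rw [hA, hB, Finset.sum_mul_sum, Finset.sum_product]
    rw [h1, h2]
    apply Finset.sum_le_sum_of_subset_of_nonneg hsub
    intro p hp _
    have h1 : 0 < x p.1 := hx _ (Finset.mem_range.mp (Finset.mem_filter.mp (Finset.mem_product.mp hp).1).1)
    have h2 : 0 < x p.2 := hx _ (Finset.mem_range.mp (Finset.mem_filter.mp (Finset.mem_product.mp hp).2).1)
    positivity
  rw [← hAB]
  nlinarith [sq_nonneg (A - B), key]
end

section
/- The number of connected regions into which m affine hyperplanes partition R^n is at most ∑_{k=0}^{n} C(m, k). -/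
/-- The dot product on `Fin n → ℝ`. -/
noncomputable def dot {n : ℕ} (a x : Fin n → ℝ) : ℝ := ∑ i, a i * x i

open Finset

lemma dot_continuous {n : ℕ} (c : Fin n → ℝ) : Continuous (fun x => dot c x) := by
  unfold dot
  exact continuous_finset_sum _ fun i _ => continuous_const.mul (continuous_apply i)

lemma dot_isLinear {n : ℕ} (c : Fin n → ℝ) : IsLinearMap ℝ (fun x : Fin n → ℝ => dot c x) := by
  constructor
  · intro x y; simp [dot, mul_add, Finset.sum_add_distrib]
  · intro r x
    simp only [dot, Pi.smul_apply, smul_eq_mul, Finset.mul_sum]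
    exact Finset.sum_congr rfl fun i _ => by ring

lemma dot_sum_left {n m : ℕ} (s : Finset (Fin m)) (G : Fin m → ℝ) (a : Fin m → Fin n → ℝ)
    (x : Fin n → ℝ) : dot (∑ i ∈ s, G i • a i) x = ∑ i ∈ s, G i * dot (a i) x := by
  simp only [dot, Finset.sum_apply, Pi.smul_apply, smul_eq_mul, Finset.mul_sum,
    Finset.sum_mul]
  rw [Finset.sum_comm]
  exact Finset.sum_congr rfl fun i _ => Finset.sum_congr rfl fun j _ => by ring

/-- A preconnected set avoiding the hyperplane `dot c · = r` lies on one side. -/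
lemma sign_const {n : ℕ} {C : Set (Fin n → ℝ)} (hC : IsPreconnected C) {c : Fin n → ℝ} {r : ℝ}
    (hfr : ∀ z ∈ C, dot c z ≠ r) {x y : Fin n → ℝ} (hx : x ∈ C) (hy : y ∈ C) :
    (r < dot c x ↔ r < dot c y) := by
  have key : ∀ u v : Fin n → ℝ, u ∈ C → v ∈ C → r < dot c u → r < dot c v := by
    intro u v hu hv hu'
    by_contra h2
    push_neg at h2
    obtain ⟨z, hz, hz'⟩ := hC.intermediate_value₂ hv hu
      (dot_continuous c).continuousOn continuousOn_const h2 hu'.le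
    exact hfr z hz hz'
  exact ⟨key x y hx hy, key y x hy hx⟩

/-- VC-style lemma: if every sign pattern on `s` is realizable by a point avoiding all
hyperplanes, then `s.card ≤ n`. -/
lemma shatter_card_le {n m : ℕ} (a : Fin m → Fin n → ℝ) (b : Fin m → ℝ) (s : Finset (Fin m))
    (hsh : ∀ t ⊆ s, ∃ x : Fin n → ℝ, (∀ i, dot (a i) x ≠ b i) ∧
      ∀ i ∈ s, (b i < dot (a i) x ↔ i ∈ t)) : s.card ≤ n := by
  classical
  by_contra hlt
  push_neg at hlt
  -- helper: from a nontrivial relation with nonpositive `b`-part we get a contradiction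
  have helper : ∀ G : Fin m → ℝ, (∑ i ∈ s, G i • a i) = 0 → (∑ i ∈ s, G i * b i) ≤ 0 →
      (∃ i ∈ s, G i ≠ 0) → False := by
    rintro G hG0 hGb ⟨i0, hi0s, hi0⟩
    obtain ⟨x, hx, hsign⟩ := hsh (s.filter (fun i => G i < 0)) (filter_subset _ _)
    have strict : ∀ i ∈ s, G i ≠ 0 → G i * (dot (a i) x - b i) < 0 := by
      intro i hi hGi
      rcases hGi.lt_or_gt with hneg | hpos
      · have : b i < dot (a i) x := (hsign i hi).2 (mem_filter.2 ⟨hi, hneg⟩)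
        exact mul_neg_of_neg_of_pos hneg (by linarith)
      · have h1 : ¬ b i < dot (a i) x := fun h =>
          absurd (mem_filter.1 ((hsign i hi).1 h)).2 (by linarith)
        have h2 : dot (a i) x < b i := lt_of_le_of_ne (not_lt.1 h1) (hx i)
        exact mul_neg_of_pos_of_neg hpos (by linarith)
    have key : ∀ i ∈ s, G i * (dot (a i) x - b i) ≤ 0 := by
      intro i hi
      by_cases hGi : G i = 0
      · simp [hGi]
      · exact (strict i hi hGi).le
    have hT : ∑ i ∈ s, G i * (dot (a i) x - b i) < 0 := by
      have := Finset.sum_lt_sum key ⟨i0, hi0s, strict i0 hi0s hi0⟩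
      simpa [Prod.fst_sum] using this
    have hT2 : ∑ i ∈ s, G i * (dot (a i) x - b i)
        = dot (∑ i ∈ s, G i • a i) x - ∑ i ∈ s, G i * b i := by
      rw [dot_sum_left, ← Finset.sum_sub_distrib]
      exact Finset.sum_congr rfl fun i _ => by ring
    rw [hT2, hG0] at hT
    simp only [dot] at hT
    simp only [Pi.zero_apply, zero_mul, Finset.sum_const_zero, zero_sub, neg_neg] at hT
    linarith
  -- linear algebra: get a nontrivial relation
  have hrank : Module.finrank ℝ ((Fin n → ℝ) × ℝ) = n + 1 := by
    simp [Module.finrank_prod]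
  let v : Option {i // i ∈ s} → (Fin n → ℝ) × ℝ :=
    fun o => o.elim ((0 : Fin n → ℝ), (1 : ℝ)) (fun i => (a i, b i))
  have hcard : Module.finrank ℝ ((Fin n → ℝ) × ℝ) < Fintype.card (Option {i // i ∈ s}) := by
    rw [hrank, Fintype.card_option, Fintype.card_coe]
    omega
  have hnli : ¬ LinearIndependent ℝ v := fun h => absurd h.fintype_card_le_finrank (not_le.2 hcard)
  obtain ⟨g, hg, j, hj⟩ := Fintype.not_linearIndependent_iff.mp hnli
  set G : Fin m → ℝ := fun i => if h : i ∈ s then g (some ⟨i, h⟩) else 0 with hGdef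
  have hGval : ∀ i : {i // i ∈ s}, G ↑i = g (some i) := by
    intro i; simp [hGdef, i.2]
  rw [Fintype.sum_option] at hg
  have hsum_eq : ∀ (f : Fin m → (Fin n → ℝ) × ℝ),
      ∑ i : {i // i ∈ s}, g (some i) • f ↑i = ∑ i ∈ s, G i • f i := by
    intro f
    rw [← Finset.sum_coe_sort s (fun i => G i • f i)]
    exact Finset.sum_congr rfl fun i _ => by rw [hGval]
  have hg' : g none • ((0 : Fin n → ℝ), (1 : ℝ)) + ∑ i ∈ s, G i • (a i, b i) = 0 := by
    rw [← hsum_eq (fun i => (a i, b i))]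
    exact hg
  have h1 : ∑ i ∈ s, G i • a i = 0 := by
    have := congrArg Prod.fst hg'
    simpa [Prod.fst_sum] using this
  have h2 : g none + ∑ i ∈ s, G i * b i = 0 := by
    have := congrArg Prod.snd hg'
    simpa [Prod.snd_sum, smul_eq_mul] using this
  have hex : ∃ i ∈ s, G i ≠ 0 := by
    by_contra hall
    push_neg at hall
    have hz : ∀ o, g o = 0 := by
      intro o
      match o with
      | none =>
        have : ∑ i ∈ s, G i * b i = 0 :=
          Finset.sum_eq_zero fun i hi => by rw [hall i hi, zero_mul]
        linarith [h2]
      | some i => rw [← hGval i]; exact hall i i.2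
    exact hj (hz j)
  rcases le_or_gt (∑ i ∈ s, G i * b i) 0 with hle | hgt
  · exact helper G h1 hle hex
  · refine helper (fun i => -G i) ?_ ?_ ?_
    · simp only [neg_smul, Finset.sum_neg_distrib, h1, neg_zero]
    · simp only [neg_mul, Finset.sum_neg_distrib]
      linarith
    · obtain ⟨i, hi, hGi⟩ := hex
      exact ⟨i, hi, neg_ne_zero.2 hGi⟩

theorem stmt3 (n m : ℕ) (a : Fin m → Fin n → ℝ) (b : Fin m → ℝ) (ha : ∀ i, a i ≠ 0) :
    Finite (ConnectedComponents ↥{x : Fin n → ℝ | ∀ i, dot (a i) x ≠ b i}) ∧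
      Nat.card (ConnectedComponents ↥{x : Fin n → ℝ | ∀ i, dot (a i) x ≠ b i}) ≤
        ∑ k ∈ Finset.range (n + 1), m.choose k := by
  classical
  set X : Set (Fin n → ℝ) := {x | ∀ i, dot (a i) x ≠ b i} with hXdef
  set pat : (Fin n → ℝ) → Finset (Fin m) :=
    fun x => Finset.univ.filter (fun i => b i < dot (a i) x) with hpatdef
  have pat_mem : ∀ (x : Fin n → ℝ) (i : Fin m), i ∈ pat x ↔ b i < dot (a i) x := by
    intro x i; simp [hpatdef]
  -- constancy on connected components
  have const : ∀ x y : ↥X, (ConnectedComponents.mk x = ConnectedComponents.mk y) →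
      pat ↑x = pat ↑y := by
    intro x y hxy
    have hyc : (y : ↥X) ∈ connectedComponent x := ConnectedComponents.coe_eq_coe.1 hxy.symm ▸
      mem_connectedComponent
    have hyc' : (y : ↥X) ∈ connectedComponent x := by
      have := ConnectedComponents.coe_eq_coe.1 hxy
      exact this ▸ mem_connectedComponent
    set C : Set (Fin n → ℝ) := Subtype.val '' connectedComponent x with hCdef
    have hC : IsPreconnected C :=
      Topology.IsInducing.subtypeVal.isPreconnected_image.mpr isPreconnected_connectedComponent
    have hxC : (x : Fin n → ℝ) ∈ C := ⟨x, mem_connectedComponent, rfl⟩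
    have hyC : (y : Fin n → ℝ) ∈ C := ⟨y, hyc', rfl⟩
    have hfree : ∀ i : Fin m, ∀ z ∈ C, dot (a i) z ≠ b i := by
      rintro i z ⟨⟨z', hz'⟩, _, rfl⟩
      exact hz' i
    ext i
    rw [pat_mem, pat_mem]
    exact sign_const hC (hfree i) hxC hyC
  -- same pattern implies same component, via convex cells
  have inj : ∀ x y : ↥X, pat ↑x = pat ↑y →
      ConnectedComponents.mk x = ConnectedComponents.mk y := by
    intro x y hxy
    set cell : Set (Fin n → ℝ) :=
      {z | ∀ i, if i ∈ pat (x : Fin n → ℝ) then b i < dot (a i) z else dot (a i) z < b i}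
      with hcelldef
    have hconv : Convex ℝ cell := by
      have : cell = ⋂ i, {z | if i ∈ pat (x : Fin n → ℝ) then b i < dot (a i) z
          else dot (a i) z < b i} := by
        ext z; simp [hcelldef, Set.mem_iInter]
      rw [this]
      refine convex_iInter fun i => ?_
      by_cases hi : i ∈ pat (x : Fin n → ℝ)
      · simpa [hi] using convex_halfSpace_gt (dot_isLinear (a i)) (b i)
      · simpa [hi] using convex_halfSpace_lt (dot_isLinear (a i)) (b i)
    have hcellX : cell ⊆ X := by
      intro z hz i
      have := hz i
      by_cases hi : i ∈ pat (x : Fin n → ℝ) <;> simp [hi] at this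
      · exact ne_of_gt this
      · exact ne_of_lt this
    have memcell : ∀ w : ↥X, pat ↑w = pat ↑x → (w : Fin n → ℝ) ∈ cell := by
      intro w hw i
      by_cases hi : i ∈ pat (x : Fin n → ℝ)
      · simp only [hi, if_true]
        exact (pat_mem _ i).1 (hw ▸ hi)
      · simp only [hi, if_false]
        have : ¬ b i < dot (a i) (w : Fin n → ℝ) := fun h => hi (hw ▸ (pat_mem _ i).2 h)
        exact lt_of_le_of_ne (not_lt.1 this) (w.2 i)
    have hxc : (x : Fin n → ℝ) ∈ cell := memcell x rfl
    have hyc : (y : Fin n → ℝ) ∈ cell := memcell y hxy.symm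
    set A : Set ↥X := Subtype.val ⁻¹' cell with hAdef
    have hAimg : Subtype.val '' A = cell := by
      rw [hAdef, Subtype.image_preimage_coe]
      exact Set.inter_eq_right.2 hcellX
    have hA : IsPreconnected A := by
      rw [← Topology.IsInducing.subtypeVal.isPreconnected_image, hAimg]
      exact hconv.isPreconnected
    have hyA : y ∈ connectedComponent x :=
      hA.subset_connectedComponent (show x ∈ A from hxc) (show y ∈ A from hyc)
    exact (ConnectedComponents.coe_eq_coe.2 ((connectedComponent_eq_iff_mem).2 hyA)).symm
  -- the family of realized patterns
  set 𝒜 : Finset (Finset (Fin m)) :=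
    Finset.univ.filter (fun u => ∃ x : ↥X, pat ↑x = u) with h𝒜def
  set rep : ConnectedComponents ↥X → ↥X :=
    Function.surjInv (ConnectedComponents.surjective_coe) with hrepdef
  have hrep : ∀ c, ConnectedComponents.mk (rep c) = c :=
    fun c => Function.surjInv_eq ConnectedComponents.surjective_coe c
  have hF : ∀ c, pat ↑(rep c) ∈ 𝒜 := by
    intro c
    simp only [h𝒜def, Finset.mem_filter, Finset.mem_univ, true_and]
    exact ⟨rep c, rfl⟩
  set F : ConnectedComponents ↥X → ↥𝒜 := fun c => ⟨pat ↑(rep c), hF c⟩ with hFdef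
  have hFinj : Function.Injective F := by
    intro c c' hcc
    have : pat ↑(rep c) = pat ↑(rep c') := congrArg Subtype.val hcc
    rw [← hrep c, ← hrep c']
    exact inj _ _ this
  have hfin : Finite (ConnectedComponents ↥X) := Finite.of_injective F hFinj
  refine ⟨hfin, ?_⟩
  have hcard1 : Nat.card (ConnectedComponents ↥X) ≤ 𝒜.card := by
    have := Nat.card_le_card_of_injective F hFinj
    rwa [Nat.card_eq_fintype_card (α := ↥𝒜), Fintype.card_coe] at this
  -- VC dimension bound
  have hvc : 𝒜.vcDim ≤ n := by
    refine Finset.sup_le fun s hs => ?_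
    have hsh := Finset.mem_shatterer.1 hs
    refine shatter_card_le a b s fun t ht => ?_
    obtain ⟨u, hu, hsu⟩ := hsh ht
    simp only [h𝒜def, Finset.mem_filter, Finset.mem_univ, true_and] at hu
    obtain ⟨x, hx⟩ := hu
    refine ⟨↑x, x.2, fun i hi => ?_⟩
    rw [← pat_mem]
    constructor
    · intro h
      have : i ∈ s ∩ u := Finset.mem_inter.2 ⟨hi, hx ▸ h⟩
      rwa [hsu] at this
    · intro h
      have : i ∈ s ∩ u := hsu ▸ h
      exact hx ▸ (Finset.mem_inter.1 this).2
  calc Nat.card (ConnectedComponents ↥X) ≤ 𝒜.card := hcard1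
    _ ≤ 𝒜.shatterer.card := Finset.card_le_card_shatterer 𝒜
    _ ≤ ∑ k ∈ Finset.Iic 𝒜.vcDim, (Fintype.card (Fin m)).choose k :=
        Finset.card_shatterer_le_sum_vcDim
    _ ≤ ∑ k ∈ Finset.range (n + 1), m.choose k := by
        rw [Fintype.card_fin]
        refine Finset.sum_le_sum_of_subset fun k hk => ?_
        rw [Finset.mem_range]
        exact Nat.lt_succ_of_le (le_trans (Finset.mem_Iic.1 hk) hvc)
end

section
/- The number of connected regions into which m linear hyperplanes (passing through the origin) partition R^n is at most 2·∑_{k=0}^{n-1} C(m-1, k), for m ≥ 1. -/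
open Finset

lemma pascal_sum (m d : ℕ) :
    ∑ k ∈ range d, (m+1).choose k = ∑ k ∈ range d, m.choose k + ∑ k ∈ range (d-1), m.choose k := by
  induction d with
  | zero => simp
  | succ d ih =>
    rw [Finset.sum_range_succ, ih]
    cases d with
    | zero => simp
    | succ e =>
      rw [Nat.choose_succ_succ']
      simp only [Nat.succ_sub_one] at *
      rw [Finset.sum_range_succ (n := e+1), Finset.sum_range_succ (n := e)]
      ring

lemma convex_pos {u v s t : ℝ} (hu : 0 < u) (hv : 0 < v) (hs : 0 ≤ s) (ht : 0 ≤ t)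
    (hst : s + t = 1) : 0 < s * u + t * v := by
  rcases eq_or_lt_of_le hs with h | h
  · have : t = 1 := by linarith
    simp [← h, this, hv]
  · nlinarith [mul_nonneg ht hv.le]

lemma convex_sign {u v s t : ℝ} (b : Bool) (hu : if b then 0 < u else u < 0)
    (hv : if b then 0 < v else v < 0) (hs : 0 ≤ s) (ht : 0 ≤ t) (hst : s + t = 1) :
    if b then 0 < s * u + t * v else s * u + t * v < 0 := by
  cases b with
  | true => simp at hu hv ⊢; exact convex_pos hu hv hs ht hst
  | false =>
    simp at hu hv ⊢
    have := convex_pos (u := -u) (v := -v) (by linarith) (by linarith) hs ht hst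
    linarith

def sgnSet {d m : ℕ} (f : Fin m → ((Fin d → ℝ) →ₗ[ℝ] ℝ)) : Set (Fin m → Bool) :=
  {ε | ∃ x, ∀ i, if ε i then 0 < f i x else f i x < 0}

lemma key : ∀ m, 1 ≤ m → ∀ (d : ℕ) (f : Fin m → ((Fin d → ℝ) →ₗ[ℝ] ℝ)),
    Nat.card (sgnSet f) ≤ 2 * ∑ k ∈ Finset.range d, (m - 1).choose k := by
  intro m hm
  induction m, hm using Nat.le_induction with
  | base =>
    intro d f
    cases d with
    | zero =>
      have h : sgnSet f = ∅ := by
        ext ε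
        simp only [sgnSet, Set.mem_setOf_eq, Set.mem_empty_iff_false, iff_false, not_exists]
        intro x hx
        have hx0 : x = 0 := Subsingleton.elim x 0
        have h2 := hx 0
        rw [hx0, map_zero] at h2
        split at h2 <;> linarith
      simp [h]
    | succ d' =>
      have h1 : Nat.card (sgnSet f) ≤ Nat.card (Fin 1 → Bool) :=
        Nat.card_le_card_of_injective _ Subtype.val_injective
      have h2 : Nat.card (Fin 1 → Bool) = 2 := by simp [Nat.card_eq_fintype_card]
      have h3 : ∑ k ∈ Finset.range (d' + 1), Nat.choose 0 k = 1 := by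
        rw [Finset.sum_eq_single_of_mem 0 (Finset.mem_range.2 (Nat.succ_pos d'))]
        · rfl
        · intro k _ hk
          obtain ⟨j, rfl⟩ : ∃ j, k = j + 1 := ⟨k - 1, by omega⟩
          exact Nat.choose_zero_succ j
      simp only [Nat.sub_self]
      omega
  | succ m hm ih =>
    intro d g
    by_cases hg : g (Fin.last m) = 0
    · have h : sgnSet g = ∅ := by
        ext ε
        simp only [sgnSet, Set.mem_setOf_eq, Set.mem_empty_iff_false, iff_false, not_exists]
        intro x hx
        have h2 := hx (Fin.last m)
        rw [hg] at h2
        simp only [LinearMap.zero_apply] at h2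
        split at h2 <;> linarith
      simp [h]
    · cases d with
      | zero =>
        exact absurd (LinearMap.ext fun x => by rw [Subsingleton.elim x 0]; exact map_zero _) hg
      | succ d' =>
        classical
        have hrange : LinearMap.range (g (Fin.last m)) = ⊤ := by
          rcases eq_bot_or_eq_top (LinearMap.range (g (Fin.last m))) with h | h
          · exact absurd (LinearMap.range_eq_bot.1 h) hg
          · exact h
        have hfr : Module.finrank ℝ (LinearMap.ker (g (Fin.last m))) = d' := by
          have h1 := LinearMap.finrank_range_add_finrank_ker (g (Fin.last m))
          rw [hrange] at h1
          simp only [finrank_top, Module.finrank_self, Module.finrank_pi,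
            Fintype.card_fin] at h1
          omega
        obtain ⟨e⟩ : Nonempty ((Fin d' → ℝ) ≃ₗ[ℝ] LinearMap.ker (g (Fin.last m))) :=
          FiniteDimensional.nonempty_linearEquiv_of_finrank_eq
            (by rw [hfr, Module.finrank_pi]; simp)
        set ι : (Fin d' → ℝ) →ₗ[ℝ] (Fin (d' + 1) → ℝ) :=
          (LinearMap.ker (g (Fin.last m))).subtype ∘ₗ
            (e : (Fin d' → ℝ) →ₗ[ℝ] LinearMap.ker (g (Fin.last m))) with hι
        have hιker : ∀ y, g (Fin.last m) (ι y) = 0 := fun y => (e y).2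
        have hιsurj : ∀ x, g (Fin.last m) x = 0 → ∃ y, ι y = x := by
          intro x hx
          obtain ⟨y, hy⟩ := e.surjective ⟨x, hx⟩
          exact ⟨y, by simp [hι, hy]⟩
        set f' : Fin m → ((Fin d' → ℝ) →ₗ[ℝ] ℝ) := fun i => (g i.castSucc) ∘ₗ ι with hf'
        set restr : (Fin (m + 1) → Bool) → (Fin m → Bool) := fun ε i => ε i.castSucc with hrestrdef
        have hrestr : ∀ ε ∈ sgnSet g, restr ε ∈ sgnSet (fun i => g i.castSucc) := by
          rintro ε ⟨x, hx⟩
          exact ⟨x, fun i => hx i.castSucc⟩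
        have hB : ∀ ε : Fin (m + 1) → Bool, ε ∈ sgnSet g → ε (Fin.last m) = false →
            Fin.snoc (restr ε) true ∈ sgnSet g → restr ε ∈ sgnSet f' := by
          rintro ε ⟨xm, hxm⟩ hεl ⟨xp, hxp⟩
          have hneg : g (Fin.last m) xm < 0 := by
            have h2 := hxm (Fin.last m); rw [hεl] at h2; simpa using h2
          have hpos : 0 < g (Fin.last m) xp := by
            have h2 := hxp (Fin.last m); rw [Fin.snoc_last] at h2; simpa using h2
          set p : ℝ → (Fin (d' + 1) → ℝ) := fun t => (1 - t) • xm + t • xp with hp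
          have hcont : Continuous fun t => g (Fin.last m) (p t) := by
            exact (g (Fin.last m)).continuous_of_finiteDimensional.comp
              (((continuous_const.sub continuous_id).smul continuous_const).add
                (continuous_id.smul continuous_const))
          have hp0 : p 0 = xm := by simp [hp]
          have hp1 : p 1 = xp := by simp [hp]
          have hmem : (0 : ℝ) ∈ Set.Icc (g (Fin.last m) (p 0)) (g (Fin.last m) (p 1)) := by
            rw [hp0, hp1]
            exact ⟨hneg.le, hpos.le⟩
          obtain ⟨t, ht, hval⟩ := intermediate_value_Icc (by norm_num : (0:ℝ) ≤ 1)
            hcont.continuousOn hmem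
          obtain ⟨y, hy⟩ := hιsurj (p t) hval
          refine ⟨y, fun i => ?_⟩
          have heval : f' i y = (1 - t) * g i.castSucc xm + t * g i.castSucc xp := by
            simp [hf', hy, hp, map_add, map_smul, smul_eq_mul]
          have h1 := hxm i.castSucc
          have h2 := hxp i.castSucc
          rw [Fin.snoc_castSucc] at h2
          have h3 := convex_sign (s := 1 - t) (t := t) (restr ε i) h1 h2
            (by linarith [ht.2]) ht.1 (by ring)
          rw [heval]
          exact h3
        have hcard : Nat.card (sgnSet g) ≤
            Nat.card (sgnSet (fun i => g i.castSucc)) + Nat.card (sgnSet f') := by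
          rw [← Nat.card_sum]
          have hsnoc : ∀ ε : Fin (m + 1) → Bool, ε (Fin.last m) = true →
              Fin.snoc (restr ε) true = ε := by
            intro ε hl
            funext i
            induction i using Fin.lastCases with
            | last => rw [Fin.snoc_last, hl]
            | cast i => rw [Fin.snoc_castSucc]
          apply Nat.card_le_card_of_injective
            (fun ε : ↥(sgnSet g) =>
              if hl : ε.1 (Fin.last m) = true then
                (Sum.inl ⟨restr ε.1, hrestr _ ε.2⟩ :
                  ↥(sgnSet (fun i => g i.castSucc)) ⊕ ↥(sgnSet f'))
              else if hs : Fin.snoc (restr ε.1) true ∈ sgnSet g then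
                Sum.inr ⟨restr ε.1, hB _ ε.2 (by simpa using hl) hs⟩
              else Sum.inl ⟨restr ε.1, hrestr _ ε.2⟩)
          rintro ⟨ε, hε⟩ ⟨ε', hε'⟩ hjj
          simp only at hjj
          have hext : restr ε = restr ε' → ε (Fin.last m) = ε' (Fin.last m) → ε = ε' := by
            intro h1 h2
            funext i
            induction i using Fin.lastCases with
            | last => exact h2
            | cast i => exact congrFun h1 i
          apply Subtype.ext
          by_cases h1 : ε (Fin.last m) = true <;> by_cases h2 : ε' (Fin.last m) = true
          · rw [dif_pos h1, dif_pos h2] at hjj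
            have h3 := Sum.inl.inj hjj
            exact hext (congrArg Subtype.val h3) (h1.trans h2.symm)
          · rw [dif_pos h1, dif_neg h2] at hjj
            by_cases h3 : Fin.snoc (restr ε') true ∈ sgnSet g
            · rw [dif_pos h3] at hjj
              exact absurd hjj (by simp)
            · rw [dif_neg h3] at hjj
              have h4 : restr ε = restr ε' := congrArg Subtype.val (Sum.inl.inj hjj)
              exfalso
              apply h3
              rw [← h4, hsnoc ε h1]
              exact hε
          · rw [dif_pos h2, dif_neg h1] at hjj
            by_cases h3 : Fin.snoc (restr ε) true ∈ sgnSet g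
            · rw [dif_pos h3] at hjj
              exact absurd hjj (by simp)
            · rw [dif_neg h3] at hjj
              have h4 : restr ε = restr ε' := congrArg Subtype.val (Sum.inl.inj hjj)
              exfalso
              apply h3
              rw [h4, hsnoc ε' h2]
              exact hε'
          · rw [dif_neg h1, dif_neg h2] at hjj
            by_cases h3 : Fin.snoc (restr ε) true ∈ sgnSet g <;>
              by_cases h4 : Fin.snoc (restr ε') true ∈ sgnSet g
            · rw [dif_pos h3, dif_pos h4] at hjj
              have h5 := Sum.inr.inj hjj
              exact hext (congrArg Subtype.val h5)
                (by rw [Bool.not_eq_true] at h1 h2; rw [h1, h2])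
            · rw [dif_pos h3, dif_neg h4] at hjj
              exact absurd hjj (by simp)
            · rw [dif_neg h3, dif_pos h4] at hjj
              exact absurd hjj (by simp)
            · rw [dif_neg h3, dif_neg h4] at hjj
              have h5 := Sum.inl.inj hjj
              exact hext (congrArg Subtype.val h5)
                (by rw [Bool.not_eq_true] at h1 h2; rw [h1, h2])
        calc Nat.card (sgnSet g) ≤
            Nat.card (sgnSet (fun i => g i.castSucc)) + Nat.card (sgnSet f') := hcard
          _ ≤ 2 * ∑ k ∈ Finset.range (d' + 1), (m - 1).choose k +
              2 * ∑ k ∈ Finset.range d', (m - 1).choose k :=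
            add_le_add (ih _ _) (ih _ _)
          _ = 2 * ∑ k ∈ Finset.range (d' + 1), (m + 1 - 1).choose k := by
            obtain ⟨m'', rfl⟩ : ∃ m'', m = m'' + 1 := ⟨m - 1, by omega⟩
            simp only [Nat.add_sub_cancel]
            rw [pascal_sum m'' (d' + 1)]
            simp only [Nat.succ_sub_one]
            ring

/-- `dot a` as a linear map. -/
noncomputable def dotLin {n : ℕ} (a : Fin n → ℝ) : (Fin n → ℝ) →ₗ[ℝ] ℝ where
  toFun x := dot a x
  map_add' x y := by
    simp only [dot, Pi.add_apply, mul_add]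
    rw [Finset.sum_add_distrib]
  map_smul' c x := by
    simp only [dot, Pi.smul_apply, smul_eq_mul, RingHom.id_apply, Finset.mul_sum]
    exact Finset.sum_congr rfl fun i _ => by ring

theorem stmt4 (n m : ℕ) (hm : 1 ≤ m) (a : Fin m → Fin n → ℝ) (ha : ∀ i, a i ≠ 0) :
    Finite (ConnectedComponents ↥{x : Fin n → ℝ | ∀ i, dot (a i) x ≠ 0}) ∧
      Nat.card (ConnectedComponents ↥{x : Fin n → ℝ | ∀ i, dot (a i) x ≠ 0}) ≤
        2 * ∑ k ∈ Finset.range n, (m - 1).choose k := by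
  classical
  set U : Set (Fin n → ℝ) := {x | ∀ i, dot (a i) x ≠ 0} with hU
  set f : Fin m → ((Fin n → ℝ) →ₗ[ℝ] ℝ) := fun i => dotLin (a i) with hf
  have hdot : ∀ (i : Fin m) (x : Fin n → ℝ), dot (a i) x = f i x := fun i x => rfl
  set sgn : ↥U → (Fin m → Bool) := fun x i => decide (0 < dot (a i) x.1) with hsgn
  have hsgncond : ∀ (x : ↥U) (i : Fin m),
      if sgn x i then 0 < dot (a i) x.1 else dot (a i) x.1 < 0 := by
    intro x i
    by_cases h : 0 < dot (a i) x.1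
    · simp [hsgn, h]
    · have h2 : dot (a i) x.1 < 0 := lt_of_le_of_ne (not_lt.1 h) (x.2 i)
      simp [hsgn, h, h2]
  have hsgnmem : ∀ x : ↥U, sgn x ∈ sgnSet f := by
    intro x
    refine ⟨x.1, fun i => ?_⟩
    have h := hsgncond x i
    rwa [hdot] at h
  have hsame : ∀ x y : ↥U, sgn x = sgn y → connectedComponent x = connectedComponent y := by
    intro x y hxy
    set W : Set (Fin n → ℝ) :=
      {z | ∀ i, if sgn x i then 0 < dot (a i) z else dot (a i) z < 0} with hW
    have hWU : W ⊆ U := by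
      intro z hz i h
      have h2 := hz i
      rw [h] at h2
      split at h2 <;> linarith
    have hWconv : Convex ℝ W := by
      intro z hz w hw s t hs ht hst i
      have heq : dot (a i) (s • z + t • w) = s * dot (a i) z + t * dot (a i) w := by
        rw [hdot, map_add, map_smul, map_smul, smul_eq_mul, smul_eq_mul, hdot i z, hdot i w]
      rw [Set.mem_setOf_eq] at hz hw
      show if sgn x i then 0 < dot (a i) (s • z + t • w) else dot (a i) (s • z + t • w) < 0
      rw [heq]
      exact convex_sign (s := s) (t := t) (sgn x i) (hz i) (hw i) hs ht hst
    have hWpre : IsPreconnected (Subtype.val ⁻¹' W : Set ↥U) := by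
      apply Topology.IsInducing.subtypeVal.isPreconnected_image.mp
      rw [Subtype.image_preimage_coe]
      rw [Set.inter_eq_right.mpr hWU]
      exact hWconv.isPreconnected
    have hxW : x ∈ Subtype.val ⁻¹' W := fun i => hsgncond x i
    have hyW : y ∈ Subtype.val ⁻¹' W := by
      intro i
      rw [hxy]
      exact hsgncond y i
    have h1 := hWpre.subset_connectedComponent hxW
    exact connectedComponent_eq (h1 hyW)
  have hsurj : Function.Surjective
      (ConnectedComponents.mk : ↥U → ConnectedComponents ↥U) :=
    ConnectedComponents.surjective_coe
  set rep : ConnectedComponents ↥U → ↥U := Function.surjInv hsurj with hrepdef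
  have hrep : ∀ c, ConnectedComponents.mk (rep c) = c := Function.surjInv_eq hsurj
  set ψ : ConnectedComponents ↥U → ↥(sgnSet f) := fun c => ⟨sgn (rep c), hsgnmem _⟩ with hψ
  have hinj : Function.Injective ψ := by
    intro c c' h
    have h2 : sgn (rep c) = sgn (rep c') := congrArg Subtype.val h
    have h3 := hsame _ _ h2
    rw [← hrep c, ← hrep c', ConnectedComponents.coe_eq_coe]
    exact h3
  refine ⟨Finite.of_injective ψ hinj, ?_⟩
  calc Nat.card (ConnectedComponents ↥U) ≤ Nat.card ↥(sgnSet f) :=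
        Nat.card_le_card_of_injective ψ hinj
    _ ≤ 2 * ∑ k ∈ Finset.range n, (m - 1).choose k := key m hm n f
end

section
/- For any finite set S ⊂ R^n, the number of threshold functions on S is at most 2·∑_{k=0}^{n} C(|S|-1, k). -/
/-- The set of threshold functions on `S`, viewed as Boolean functions on `S`:
`f x = 1` iff `⟨a, x⟩ + α ≥ 0` for some weights `a` and bias `α`. -/
def thrFun {n : ℕ} (S : Set (Fin n → ℝ)) : Set (S → Bool) :=
  {f | ∃ a : Fin n → ℝ, ∃ α : ℝ, ∀ x : S, (f x = true ↔ 0 ≤ dot a (x : Fin n → ℝ) + α)}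


noncomputable def Lmap {n : ℕ} (x : Fin n → ℝ) : ((Fin n → ℝ) × ℝ) →ₗ[ℝ] ℝ where
  toFun w := dot w.1 x + w.2
  map_add' u v := by
    simp [dot, add_mul, Finset.sum_add_distrib]
    ring
  map_smul' t u := by
    simp only [dot, smul_eq_mul, Prod.smul_fst, Prod.smul_snd, RingHom.id_apply, Pi.smul_apply]
    rw [mul_add, Finset.mul_sum]
    ring_nf

noncomputable def eFam (n : ℕ) : Fin (n+1) → ((Fin n → ℝ) × ℝ) →ₗ[ℝ] ℝ :=
  Fin.snoc (fun j => (LinearMap.proj j).comp (LinearMap.fst ℝ (Fin n → ℝ) ℝ))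
    (LinearMap.snd ℝ (Fin n → ℝ) ℝ)

noncomputable def cFam {n : ℕ} (x : Fin n → ℝ) : Fin (n+1) → ℝ := Fin.snoc x 1

lemma Lmap_eq {n : ℕ} (x : Fin n → ℝ) : Lmap x = ∑ j, cFam x j • eFam n j := by
  apply LinearMap.ext
  intro w
  simp only [LinearMap.sum_apply, LinearMap.smul_apply, smul_eq_mul]
  rw [Fin.sum_univ_castSucc]
  simp [Lmap, eFam, cFam, dot, Fin.snoc_castSucc, Fin.snoc_last]
  exact Finset.sum_congr rfl (fun i _ => mul_comm _ _)

lemma strict_witness {n : ℕ} (S : Finset (Fin n → ℝ)) (a : Fin n → ℝ) (α : ℝ) :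
    ∃ α' : ℝ, ∀ x ∈ S, (dot a x + α' ≠ 0) ∧ (0 ≤ dot a x + α ↔ 0 < dot a x + α') := by
  classical
  set N := S.filter (fun x => dot a x + α < 0) with hN
  by_cases hNe : N.Nonempty
  · set mm := N.inf' hNe (fun x => -(dot a x + α)) with hm
    have hmpos : 0 < mm := by
      obtain ⟨x, hxN, hxeq⟩ := Finset.exists_mem_eq_inf' hNe (fun x => -(dot a x + α))
      rw [hm, hxeq]
      have : dot a x + α < 0 := (Finset.mem_filter.mp hxN).2
      linarith
    refine ⟨α + mm/2, fun x hx => ?_⟩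
    by_cases hneg : dot a x + α < 0
    · have hxN : x ∈ N := Finset.mem_filter.mpr ⟨hx, hneg⟩
      have hle : mm ≤ -(dot a x + α) := Finset.inf'_le _ hxN
      have hlt : dot a x + (α + mm/2) < 0 := by linarith
      refine ⟨ne_of_lt hlt, ?_, ?_⟩
      · intro h; linarith
      · intro h; linarith
    · push_neg at hneg
      have hpos : 0 < dot a x + (α + mm/2) := by linarith
      exact ⟨ne_of_gt hpos, fun _ => hpos, fun _ => hneg⟩
  · refine ⟨α + 1, fun x hx => ?_⟩
    have hnn : 0 ≤ dot a x + α := by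
      by_contra hc
      push_neg at hc
      exact hNe ⟨x, Finset.mem_filter.mpr ⟨hx, hc⟩⟩
    have : 0 < dot a x + (α + 1) := by linarith
    exact ⟨ne_of_gt this, fun _ => this, fun _ => hnn⟩


def Pat {ι V : Type} [AddCommGroup V] [Module ℝ V]
    (T : Finset ι) (L : ι → V →ₗ[ℝ] ℝ) : Set (ι → Bool) :=
  {f | (∀ x, x ∉ T → f x = false) ∧
    ∃ w : V, ∀ x ∈ T, L x w ≠ 0 ∧ (f x = true ↔ 0 < L x w)}

-- claims, tested standalone with sorried context
section
variable {ι V : Type} [DecidableEq ι] [AddCommGroup V] [Module ℝ V] (T : Finset ι) (L : ι → V →ₗ[ℝ] ℝ)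
  (x0 : ι)

lemma claimB {f : ι → Bool} (hf : f ∈ Pat T L) :
    Function.update f x0 false ∈ Pat (T.erase x0) L := by
  obtain ⟨hsupp, w, hw⟩ := hf
  constructor
  · intro x hx
    by_cases hxx : x = x0
    · subst hxx; simp
    · rw [Function.update_of_ne hxx]
      exact hsupp x (fun hxT => hx (Finset.mem_erase.mpr ⟨hxx, hxT⟩))
  · refine ⟨w, fun x hx => ?_⟩
    rw [Function.update_of_ne (Finset.ne_of_mem_erase hx)]
    exact hw x (Finset.mem_of_mem_erase hx)

lemma claimC (hx0 : x0 ∈ T) {f : ι → Bool} (hf : f ∈ Pat T L) (hft : f x0 = true)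
    (hf' : Function.update f x0 false ∈ Pat T L) :
    Function.update f x0 false ∈ Pat (T.erase x0)
      (fun x => (L x).comp (LinearMap.ker (L x0)).subtype) := by
  obtain ⟨hsupp, wp, hwp⟩ := hf
  obtain ⟨-, wm, hwm⟩ := hf'
  have hp : 0 < L x0 wp := ((hwp x0 hx0).2).mp hft
  have hq : L x0 wm < 0 := by
    have h := hwm x0 hx0
    have hnlt : ¬ (0 < L x0 wm) := fun hlt => by
      have := h.2.mpr hlt
      simp at this
    exact lt_of_le_of_ne (not_lt.mp hnlt) h.1
  set w : V := (L x0 wp) • wm - (L x0 wm) • wp with hwdef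
  have hker : w ∈ LinearMap.ker (L x0) := by
    simp only [LinearMap.mem_ker, hwdef, map_sub, map_smul, smul_eq_mul]
    ring
  constructor
  · intro x hx
    by_cases hxx : x = x0
    · subst hxx; simp
    · rw [Function.update_of_ne hxx]
      exact hsupp x (fun hxT => hx (Finset.mem_erase.mpr ⟨hxx, hxT⟩))
  · refine ⟨⟨w, hker⟩, fun x hx => ?_⟩
    have hxT := Finset.mem_of_mem_erase hx
    have hxne := Finset.ne_of_mem_erase hx
    have ha := hwp x hxT
    have hb := hwm x hxT
    rw [Function.update_of_ne hxne] at hb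
    rw [Function.update_of_ne hxne]
    have hval : (L x).comp (LinearMap.ker (L x0)).subtype ⟨w, hker⟩
        = L x0 wp * L x wm - L x0 wm * L x wp := by
      simp [hwdef, map_sub, map_smul, smul_eq_mul]
    rw [hval]
    cases hfx : f x with
    | false =>
        rw [hfx] at ha hb
        simp only [Bool.false_eq_true, false_iff, not_lt] at ha hb
        have ha' : L x wp < 0 := lt_of_le_of_ne ha.2 ha.1
        have hb' : L x wm < 0 := lt_of_le_of_ne hb.2 hb.1
        constructor
        · apply ne_of_lt
          nlinarith
        · simp only [Bool.false_eq_true, false_iff, not_lt]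
          nlinarith
    | true =>
        rw [hfx] at ha hb
        simp only [true_iff] at ha hb
        have ha' : 0 < L x wp := ha.2
        have hb' : 0 < L x wm := hb.2
        constructor
        · apply ne_of_gt; nlinarith
        · simp only [true_iff]; nlinarith

lemma upd_inj {f g : ι → Bool} (h : Function.update f x0 false = Function.update g x0 false)
    (h0 : f x0 = g x0) : f = g := by
  funext x
  by_cases hxx : x = x0
  · subst hxx; exact h0
  · have := congrFun h x
    rwa [Function.update_of_ne hxx, Function.update_of_ne hxx] at this

end

lemma restrict_eq {V : Type} [AddCommGroup V] [Module ℝ V] {d : ℕ}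
    (L0 Lx : V →ₗ[ℝ] ℝ) (e : Fin (d+1) → V →ₗ[ℝ] ℝ) (c0 cx : Fin (d+1) → ℝ)
    (j0 : Fin (d+1)) (hj0 : c0 j0 ≠ 0)
    (hL0 : L0 = ∑ j, c0 j • e j) (hLx : Lx = ∑ j, cx j • e j) :
    Lx.comp (LinearMap.ker L0).subtype = ∑ j : Fin d,
      (cx (j0.succAbove j) - cx j0 * c0 (j0.succAbove j) / c0 j0) •
        ((e (j0.succAbove j)).comp (LinearMap.ker L0).subtype) := by
  apply LinearMap.ext
  rintro ⟨w, hw⟩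
  have hw0 : L0 w = 0 := hw
  have h1 : ∑ j, c0 j * e j w = 0 := by
    rw [hL0] at hw0
    simpa [LinearMap.sum_apply, smul_eq_mul] using hw0
  have h2 : Lx w = ∑ j, cx j * e j w := by
    rw [hLx]; simp [LinearMap.sum_apply, smul_eq_mul]
  show Lx w = _
  simp only [LinearMap.sum_apply, LinearMap.smul_apply, LinearMap.comp_apply,
    Submodule.subtype_apply, smul_eq_mul]
  rw [h2, Fin.sum_univ_succAbove (fun j => cx j * e j w) j0]
  rw [Fin.sum_univ_succAbove (fun j => c0 j * e j w) j0] at h1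
  have hSig : ∑ i : Fin d, c0 (j0.succAbove i) * e (j0.succAbove i) w
      = -(c0 j0 * e j0 w) := by linarith
  have expand : ∑ i : Fin d,
      (cx (j0.succAbove i) - cx j0 * c0 (j0.succAbove i) / c0 j0) * e (j0.succAbove i) w
      = ∑ i : Fin d, cx (j0.succAbove i) * e (j0.succAbove i) w
        - (cx j0 / c0 j0) * ∑ i : Fin d, c0 (j0.succAbove i) * e (j0.succAbove i) w := by
    rw [Finset.mul_sum, ← Finset.sum_sub_distrib]
    apply Finset.sum_congr rfl
    intro i _
    field_simp
  rw [expand, hSig]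
  field_simp
  ring

lemma pat_finite {ι V : Type} [AddCommGroup V] [Module ℝ V]
    (T : Finset ι) (L : ι → V →ₗ[ℝ] ℝ) : (Pat T L).Finite := by
  have hF : ({f : ι → Bool | ∀ x, x ∉ T → f x = false}).Finite := by
    rw [← Set.finite_coe_iff]
    apply Finite.of_injective (fun (f : ↥{f : ι → Bool | ∀ x, x ∉ T → f x = false}) => (fun x : ↥T => (f : ι → Bool) x))
    rintro ⟨f, hf⟩ ⟨g, hg⟩ h
    simp only [Subtype.mk.injEq]
    ext x
    by_cases hx : x ∈ T
    · exact congrFun h ⟨x, hx⟩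
    · rw [hf x hx, hg x hx]
  exact hF.subset (fun f hf => hf.1)

instance patFinite {ι V : Type} [AddCommGroup V] [Module ℝ V]
    (T : Finset ι) (L : ι → V →ₗ[ℝ] ℝ) : Finite ↥(Pat T L) :=
  (pat_finite T L).to_subtype

def G : ℕ → ℕ → ℕ
  | 0, _ => 1
  | _+1, 0 => 0
  | m+1, d+1 => 2 * ∑ k ∈ Finset.range (d+1), Nat.choose m k

lemma sumPascal (m D : ℕ) : ∑ k ∈ Finset.range (D+1), (m+1).choose k
    = ∑ k ∈ Finset.range (D+1), m.choose k + ∑ k ∈ Finset.range D, m.choose k := by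
  induction D with
  | zero => simp
  | succ D ih =>
      rw [Finset.sum_range_succ, ih,
        Finset.sum_range_succ (f := fun k => m.choose k) (n := D+1),
        Finset.sum_range_succ (f := fun k => m.choose k) (n := D),
        Nat.choose_succ_succ]
      simp only [Nat.succ_eq_add_one]
      omega

lemma G_rec (m d : ℕ) : G m (d+1) + G m d ≤ G (m+1) (d+1) := by
  match m, d with
  | 0, d =>
      have : ∀ D, ∑ k ∈ Finset.range (D+1), Nat.choose 0 k = 1 := by
        intro D
        induction D with
        | zero => simp
        | succ D ih => rw [Finset.sum_range_succ, ih, Nat.choose_eq_zero_of_lt (by omega)]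
      cases d with
      | zero => simp [G, this]
      | succ d => simp [G, this]
  | m+1, 0 => simp [G]
  | m+1, d+1 =>
      show 2 * _ + 2 * _ ≤ 2 * _
      rw [sumPascal]
      ring_nf
      omega

lemma key_s5 (m : ℕ) : ∀ {d : ℕ} {ι V : Type} [DecidableEq ι] [AddCommGroup V] [Module ℝ V]
    (T : Finset ι) (L : ι → V →ₗ[ℝ] ℝ) (e : Fin d → V →ₗ[ℝ] ℝ) (c : ι → Fin d → ℝ),
    (∀ x ∈ T, L x = ∑ j, c x j • e j) → T.card = m →
    Nat.card ↥(Pat T L) ≤ G m d := by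
  induction m with
  | zero =>
      intro d ι V _ _ _ T L e c hL hm
      rw [Finset.card_eq_zero] at hm
      subst hm
      have hsub : Pat (∅ : Finset ι) L ⊆ {fun _ => false} := by
        rintro f ⟨h1, -⟩
        simp only [Set.mem_singleton_iff]
        funext x
        exact h1 x (Finset.notMem_empty x)
      calc Nat.card ↥(Pat (∅ : Finset ι) L)
          ≤ Nat.card ↥({fun _ => false} : Set (ι → Bool)) :=
            Nat.card_mono (Set.finite_singleton _) hsub
        _ = 1 := by simp
        _ ≤ G 0 d := le_refl _
  | succ m ih =>
      intro d ι V _ _ _ T L e c hL hm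
      have hT : T.Nonempty := by rw [← Finset.card_pos, hm]; omega
      obtain ⟨x0, hx0⟩ := hT
      have hm' : (T.erase x0).card = m := by
        rw [Finset.card_erase_of_mem hx0, hm]
        omega
      match d, e, c with
      | 0, e, c =>
          have hemp : Pat T L = ∅ := by
            ext f
            simp only [Set.mem_empty_iff_false, iff_false]
            rintro ⟨-, w, hw⟩
            have h := (hw x0 hx0).1
            rw [hL x0 hx0] at h
            simp at h
          rw [hemp]
          simp [G]
      | d+1, e, c =>
          by_cases hc0 : ∀ j, c x0 j = 0
          · have hemp : Pat T L = ∅ := by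
              ext f
              simp only [Set.mem_empty_iff_false, iff_false]
              rintro ⟨-, w, hw⟩
              have h := (hw x0 hx0).1
              rw [hL x0 hx0] at h
              simp [hc0] at h
            rw [hemp]
            simp
          · push_neg at hc0
            obtain ⟨j0, hj0⟩ := hc0
            set W := LinearMap.ker (L x0) with hW
            set L' : ι → ↥W →ₗ[ℝ] ℝ := fun x => (L x).comp W.subtype with hL'def
            set e' : Fin d → ↥W →ₗ[ℝ] ℝ :=
              fun j => (e (j0.succAbove j)).comp W.subtype with he'
            set c' : ι → Fin d → ℝ :=
              fun x j => c x (j0.succAbove j) - c x j0 * c x0 (j0.succAbove j) / c x0 j0 with hc'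
            have hL' : ∀ x ∈ T.erase x0, L' x = ∑ j, c' x j • e' j := by
              intro x hx
              exact restrict_eq (L x0) (L x) e (c x0) (c x) j0 hj0 (hL x0 hx0)
                (hL x (Finset.mem_of_mem_erase hx))
            have ihB := ih (T.erase x0) L e c
              (fun x hx => hL x (Finset.mem_of_mem_erase hx)) hm'
            have ihC := ih (T.erase x0) L' e' c' hL' hm'
            have := pat_finite (T.erase x0) L
            have := pat_finite (T.erase x0) L'
            have hfinB : Finite ↥(Pat (T.erase x0) L) := (pat_finite _ _).to_subtype
            have hfinC : Finite ↥(Pat (T.erase x0) L') := (pat_finite _ _).to_subtype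
            classical
            set ψ : ↥(Pat T L) → ↥(Pat (T.erase x0) L) ⊕ ↥(Pat (T.erase x0) L') :=
              fun f =>
                if h : (f : ι → Bool) x0 = true ∧
                    Function.update (f : ι → Bool) x0 false ∈ Pat T L then
                  Sum.inr ⟨Function.update (f : ι → Bool) x0 false,
                    claimC T L x0 hx0 f.2 h.1 h.2⟩
                else
                  Sum.inl ⟨Function.update (f : ι → Bool) x0 false, claimB T L x0 f.2⟩
              with hψ
            have hinj : Function.Injective ψ := by
              rintro ⟨f, hf⟩ ⟨g, hg⟩ h
              simp only [hψ] at h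
              by_cases h1 : f x0 = true ∧ Function.update f x0 false ∈ Pat T L <;>
                by_cases h2 : g x0 = true ∧ Function.update g x0 false ∈ Pat T L
              · rw [dif_pos h1, dif_pos h2] at h
                have hu := Sum.inr.inj h
                have hu' : Function.update f x0 false = Function.update g x0 false :=
                  congrArg Subtype.val hu
                exact Subtype.ext (upd_inj x0 hu' (h1.1.trans h2.1.symm))
              · rw [dif_pos h1, dif_neg h2] at h
                exact absurd h (by simp)
              · rw [dif_neg h1, dif_pos h2] at h
                exact absurd h (by simp)
              · rw [dif_neg h1, dif_neg h2] at h
                have hu' : Function.update f x0 false = Function.update g x0 false :=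
                  congrArg Subtype.val (Sum.inl.inj h)
                apply Subtype.ext
                by_cases hfx : f x0 = true <;> by_cases hgx : g x0 = true
                · exact upd_inj x0 hu' (show f x0 = g x0 by rw [hfx, hgx])
                · -- f x0 = true, g x0 = false: update g = g ∈ Pat, but update f ∉ Pat
                  exfalso
                  have hgeq : Function.update g x0 false = g := by
                    funext x
                    by_cases hxx : x = x0
                    · subst hxx
                      simp [Bool.not_eq_true] at hgx
                      simp [hgx]
                    · rw [Function.update_of_ne hxx]
                  rw [not_and] at h1
                  exact (h1 hfx) (by rw [hu', hgeq]; exact hg)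
                · exfalso
                  have hfeq : Function.update f x0 false = f := by
                    funext x
                    by_cases hxx : x = x0
                    · subst hxx
                      simp [Bool.not_eq_true] at hfx
                      simp [hfx]
                    · rw [Function.update_of_ne hxx]
                  rw [not_and] at h2
                  exact (h2 hgx) (by rw [← hu', hfeq]; exact hf)
                · refine upd_inj x0 hu' (show f x0 = g x0 from ?_)
                  simp [Bool.not_eq_true] at hfx hgx
                  rw [hfx, hgx]
            calc Nat.card ↥(Pat T L)
                ≤ Nat.card (↥(Pat (T.erase x0) L) ⊕ ↥(Pat (T.erase x0) L')) :=
                  Nat.card_le_card_of_injective ψ hinj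
              _ = Nat.card ↥(Pat (T.erase x0) L) + Nat.card ↥(Pat (T.erase x0) L') :=
                  Nat.card_sum
              _ ≤ G m (d+1) + G m d := add_le_add ihB ihC
              _ ≤ G (m+1) (d+1) := G_rec m d


lemma G_le (M n : ℕ) : G M (n+1) ≤ 2 * ∑ k ∈ Finset.range (n+1), (M-1).choose k := by
  cases M with
  | zero =>
      have h0 : (1:ℕ) ≤ ∑ k ∈ Finset.range (n+1), Nat.choose 0 k := by
        have hmem : (0:ℕ) ∈ Finset.range (n+1) := by simp
        calc (1:ℕ) = Nat.choose 0 0 := rfl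
          _ ≤ ∑ k ∈ Finset.range (n+1), Nat.choose 0 k :=
            Finset.single_le_sum (fun i _ => Nat.zero_le _) hmem
      show (1:ℕ) ≤ 2 * ∑ k ∈ Finset.range (n+1), ((0:ℕ)-1).choose k
      have hz : (0:ℕ)-1 = 0 := rfl
      rw [hz]
      omega
  | succ M =>
      show (2 * ∑ k ∈ Finset.range (n+1), Nat.choose M k) ≤ _
      simp

theorem stmt5 (n : ℕ) (S : Finset (Fin n → ℝ)) :
    Nat.card ↥(thrFun (↑S : Set (Fin n → ℝ))) ≤
      2 * ∑ k ∈ Finset.range (n + 1), (S.card - 1).choose k := by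
  classical
  have hfin : Finite ↥(Pat S (Lmap (n := n))) := (pat_finite S Lmap).to_subtype
  have hmem : ∀ f : ↥(thrFun (↑S : Set (Fin n → ℝ))),
      (fun x => if h : x ∈ S then f.1 ⟨x, h⟩ else false) ∈ Pat S (Lmap (n := n)) := by
    rintro ⟨f, a, α, hfa⟩
    constructor
    · intro x hx
      simp only
      rw [dif_neg hx]
    · obtain ⟨α', hα'⟩ := strict_witness S a α
      refine ⟨(a, α'), fun x hx => ?_⟩
      have h1 := hα' x hx
      have hL : Lmap x (a, α') = dot a x + α' := rfl
      rw [hL]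
      refine ⟨h1.1, ?_⟩
      simp only [dif_pos hx]
      rw [hfa ⟨x, hx⟩]
      exact h1.2
  have hΦ : Function.Injective
      (fun f : ↥(thrFun (↑S : Set (Fin n → ℝ))) =>
        (⟨fun x => if h : x ∈ S then f.1 ⟨x, h⟩ else false, hmem f⟩ :
          ↥(Pat S (Lmap (n := n))))) := by
    rintro ⟨f, hf⟩ ⟨g, hg⟩ h
    simp only [Subtype.mk.injEq] at h
    apply Subtype.ext
    funext x
    have hx : (x : Fin n → ℝ) ∈ S := x.2
    have h2 := congrFun h x.1
    rw [dif_pos hx, dif_pos hx] at h2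
    show f x = g x
    convert h2 using 2
  calc Nat.card ↥(thrFun (↑S : Set (Fin n → ℝ)))
      ≤ Nat.card ↥(Pat S (Lmap (n := n))) := Nat.card_le_card_of_injective _ hΦ
    _ ≤ G S.card (n+1) :=
        key_s5 S.card S Lmap (eFam n) cFam (fun x _ => Lmap_eq x) rfl
    _ ≤ 2 * ∑ k ∈ Finset.range (n + 1), (S.card - 1).choose k := G_le S.card n
end

section
/- For any finite set S ⊂ R^n with |S| ≥ 1, there exist at least 2|S| distinct threshold functions on S; equivalently C(S) ≥ log₂|S| + 1. -/
/-- The capacity of `S`: binary logarithm of the number of threshold functions on `S`. -/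
noncomputable def Cap {n : ℕ} (S : Set (Fin n → ℝ)) : ℝ :=
  Real.logb 2 (Nat.card ↥(thrFun S))

/-- `a ↦ dot a d` as a linear map. -/
noncomputable def ldot {n : ℕ} (d : Fin n → ℝ) : (Fin n → ℝ) →ₗ[ℝ] ℝ where
  toFun a := dot a d
  map_add' a b := by simp [dot, add_mul, Finset.sum_add_distrib]
  map_smul' c a := by simp [dot, mul_assoc, Finset.mul_sum]

lemma exists_inj_functional {n : ℕ} (S : Finset (Fin n → ℝ)) :
    ∃ a : Fin n → ℝ, ∀ x ∈ S, ∀ y ∈ S, x ≠ y → dot a x ≠ dot a y := by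
  classical
  set ι := {p : (↑S : Set (Fin n → ℝ)) × (↑S : Set (Fin n → ℝ)) //
      (p.1 : Fin n → ℝ) ≠ (p.2 : Fin n → ℝ)} with hι
  have : Finite ι := by
    have : Finite (↑S : Set (Fin n → ℝ)) := S.finite_toSet
    infer_instance
  set K : ι → Subspace ℝ (Fin n → ℝ) :=
    fun p => LinearMap.ker (ldot ((p.1.1 : Fin n → ℝ) - (p.1.2 : Fin n → ℝ))) with hK
  have hne : ∀ i, K i ≠ ⊤ := by
    intro i htop
    set d : Fin n → ℝ := (i.1.1 : Fin n → ℝ) - (i.1.2 : Fin n → ℝ) with hd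
    have hd0 : d ≠ 0 := sub_ne_zero.mpr i.2
    obtain ⟨j, hj⟩ := Function.ne_iff.mp hd0
    have hpos : 0 < dot d d := by
      apply Finset.sum_pos'
      · intro k _; exact mul_self_nonneg _
      · exact ⟨j, Finset.mem_univ j, mul_self_pos.mpr (by simpa using hj)⟩
    have : d ∈ K i := htop ▸ Submodule.mem_top
    rw [hK] at this
    simp only [LinearMap.mem_ker] at this
    exact absurd this (by simpa [ldot, LinearMap.coe_mk, AddHom.coe_mk, ← hd] using hpos.ne')
  have hcov : ⋃ i, ((K i : Set (Fin n → ℝ))) ≠ Set.univ := by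
    intro h
    obtain ⟨i, hi⟩ := Subspace.exists_eq_top_of_iUnion_eq_univ h
    exact hne i hi
  obtain ⟨a, ha⟩ : ∃ a : Fin n → ℝ, ∀ i, a ∉ K i := by
    by_contra h
    push_neg at h
    apply hcov
    ext a
    simp only [Set.mem_iUnion, Set.mem_univ, iff_true]
    obtain ⟨i, hi⟩ := h a
    exact ⟨i, hi⟩
  refine ⟨a, fun x hx y hy hxy h => ?_⟩
  have : a ∈ K ⟨(⟨x, hx⟩, ⟨y, hy⟩), by simpa using hxy⟩ := by
    rw [hK]
    simp only [LinearMap.mem_ker]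
    show dot a (x - y) = 0
    have hsub : dot a (x - y) = dot a x - dot a y := by
      simp [dot, mul_sub, Finset.sum_sub_distrib]
    rw [hsub, h, sub_self]
  exact ha _ this

theorem stmt6 (n : ℕ) (S : Finset (Fin n → ℝ)) (hS : 1 ≤ S.card) :
    2 * S.card ≤ Nat.card ↥(thrFun (↑S : Set (Fin n → ℝ))) ∧
      Real.logb 2 S.card + 1 ≤ Cap (↑S : Set (Fin n → ℝ)) := by
  classical
  obtain ⟨a, ha⟩ := exists_inj_functional S
  set φ : (↑S : Set (Fin n → ℝ)) → ℝ := fun x => dot a x with hφ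
  have hφinj : Function.Injective φ := by
    intro x y h
    by_contra hxy
    exact ha x x.2 y y.2 (fun he => hxy (Subtype.ext he)) h
  -- upper-set threshold functions
  set f : (↑S : Set (Fin n → ℝ)) → ((↑S : Set (Fin n → ℝ)) → Bool) :=
    fun s x => decide (φ s ≤ φ x) with hf
  set g : (↑S : Set (Fin n → ℝ)) → ((↑S : Set (Fin n → ℝ)) → Bool) :=
    fun s x => decide (φ x < φ s) with hg
  have hfmem : ∀ s, f s ∈ thrFun (↑S : Set (Fin n → ℝ)) := by
    intro s
    refine ⟨a, -φ s, fun x => ?_⟩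
    simp [hf, sub_nonneg, ← sub_eq_add_neg, hφ]
  have hgmem : ∀ s, g s ∈ thrFun (↑S : Set (Fin n → ℝ)) := by
    intro s
    by_cases hT : ∃ x : (↑S : Set (Fin n → ℝ)), φ x < φ s
    · -- α = max of φ over strict lower set
      have : Finite (↑S : Set (Fin n → ℝ)) := S.finite_toSet
      have hne : {t : ℝ | ∃ x : (↑S : Set (Fin n → ℝ)), φ x < φ s ∧ φ x = t}.Finite := by
        apply Set.Finite.subset (Set.finite_range φ)
        rintro t ⟨x, _, rfl⟩; exact ⟨x, rfl⟩
      obtain ⟨x0, hx0⟩ := hT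
      set T : Finset ℝ := hne.toFinset with hT'
      have hTne : T.Nonempty := ⟨φ x0, (Set.Finite.mem_toFinset hne).mpr ⟨x0, hx0, rfl⟩⟩
      set α : ℝ := T.max' hTne with hα
      have hαlt : α < φ s := by
        obtain ⟨x, hx, he⟩ := (Set.Finite.mem_toFinset hne).mp (T.max'_mem hTne)
        rw [hα]; rw [← he] at *; exact hx
      refine ⟨fun i => -a i, α, fun x => ?_⟩
      have hda : dot (fun i => -a i) (x : Fin n → ℝ) = -φ x := by
        simp [dot, hφ, neg_mul, Finset.sum_neg_distrib]
      rw [hda]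
      simp only [hg, decide_eq_true_eq]
      constructor
      · intro hlt
        have : φ x ∈ T := (Set.Finite.mem_toFinset hne).mpr ⟨x, hlt, rfl⟩
        have := T.le_max' _ this
        linarith
      · intro h0
        have : φ x ≤ α := by linarith
        linarith
    · push_neg at hT
      refine ⟨0, -1, fun x => ?_⟩
      have : dot 0 (x : Fin n → ℝ) = 0 := by simp [dot]
      rw [this]
      simp only [hg, decide_eq_true_eq]
      constructor
      · intro hl; exact absurd hl (not_lt.mpr (hT x))
      · intro h0; linarith
  -- the injection
  set F : ((↑S : Set (Fin n → ℝ)) × Bool) → ↥(thrFun (↑S : Set (Fin n → ℝ))) :=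
    fun p => if h : p.2 then ⟨g p.1, hgmem p.1⟩ else ⟨f p.1, hfmem p.1⟩ with hF
  have hfs : ∀ s x, f s x = true ↔ φ s ≤ φ x := by intro s x; simp [hf]
  have hgs : ∀ s x, g s x = true ↔ φ x < φ s := by intro s x; simp [hg]
  have hfss : ∀ s, f s s = true := by intro s; simp [hf]
  have hgss : ∀ s, g s s = false := by intro s; simp [hg]
  have hFinj : Function.Injective F := by
    rintro ⟨s, b⟩ ⟨t, c⟩ h
    rw [hF] at h
    cases b <;> cases c <;>
      simp only [Bool.false_eq_true, dite_true, dite_false, Subtype.mk.injEq] at h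
    · -- f s = f t
      have h1 : φ t ≤ φ s := (hfs t s).mp ((congrFun h s).symm.trans (hfss s))
      have h2 : φ s ≤ φ t := (hfs s t).mp ((congrFun h t).trans (hfss t))
      exact Prod.ext (hφinj (le_antisymm h2 h1)) rfl
    · -- f s = g t
      exfalso
      have h2 : φ s < φ t := (hgs t s).mp ((congrFun h s).symm.trans (hfss s))
      have h4 : f s t = true := (hfs s t).mpr h2.le
      have := (congrFun h t).symm.trans h4
      rw [hgss t] at this
      exact Bool.false_ne_true this
    · -- g s = f t
      exfalso
      have h2 : φ t < φ s := (hgs s t).mp ((congrFun h t).trans (hfss t))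
      have h4 : f t s = true := (hfs t s).mpr h2.le
      have := (congrFun h s).trans h4
      rw [hgss s] at this
      exact Bool.false_ne_true this
    · -- g s = g t
      have h1 : ¬ φ s < φ t := by
        intro hlt
        have := (congrFun h s).trans ((hgs t s).mpr hlt)
        rw [hgss s] at this
        exact Bool.false_ne_true this
      have h2 : ¬ φ t < φ s := by
        intro hlt
        have := (congrFun h t).symm.trans ((hgs s t).mpr hlt)
        rw [hgss t] at this
        exact Bool.false_ne_true this
      exact Prod.ext (hφinj (le_antisymm (not_lt.mp h2) (not_lt.mp h1))) rfl
  have hfin : Finite ↥(thrFun (↑S : Set (Fin n → ℝ))) := by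
    have : Finite (↑S : Set (Fin n → ℝ)) := S.finite_toSet
    exact Subtype.finite
  have hcard : 2 * S.card ≤ Nat.card ↥(thrFun (↑S : Set (Fin n → ℝ))) := by
    have := Nat.card_le_card_of_injective F hFinj
    have hcs : Nat.card ((↑S : Set (Fin n → ℝ)) × Bool) = 2 * S.card := by
      rw [Nat.card_prod]
      simp [Nat.card_coe_set_eq, Set.ncard_coe_finset, Nat.card_eq_fintype_card]
      ring
    omega
  refine ⟨hcard, ?_⟩
  rw [Cap]
  have hSpos : (0 : ℝ) < (S.card : ℝ) := by exact_mod_cast hS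
  have h2 : Real.logb 2 (S.card : ℝ) + 1 = Real.logb 2 (2 * (S.card : ℝ)) := by
    rw [Real.logb_mul (by norm_num) hSpos.ne', Real.logb_self_eq_one (by norm_num)]
    ring
  rw [h2]
  have hle : (2 * (S.card : ℝ)) ≤ (Nat.card ↥(thrFun (↑S : Set (Fin n → ℝ))) : ℝ) := by
    exact_mod_cast hcard
  exact Real.logb_le_logb_of_le (by norm_num) (by linarith) hle
end

section
/- Let u_1, ..., u_k ∈ R^m be linearly independent and let V_1, ..., V_k ⊂ R^n be finite sets. Define S = ∪_{i=1}^k (u_i ⊕ V_i) ⊂ R^{m+n}, where u ⊕ V = {(u,v) : v ∈ V}. Then the number of threshold functions on S satisfies |T(S)| ≥ |T(V_1)| · ∏_{i=2}^{k} (|V_i| + 1). -/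
lemma dot_sub {n : ℕ} (g v w : Fin n → ℝ) : dot g (v - w) = dot g v - dot g w := by
  simp [dot, mul_sub, Finset.sum_sub_distrib]

lemma dot_perturb {n : ℕ} (a g x : Fin n → ℝ) (ε : ℝ) :
    dot (fun j => a j + ε * g j) x = dot a x + ε * dot g x := by
  simp [dot, add_mul, Finset.sum_add_distrib, Finset.mul_sum, mul_assoc]

lemma dot_append {m n : ℕ} (w : Fin m → ℝ) (a : Fin n → ℝ) (x : Fin m → ℝ) (y : Fin n → ℝ) :
    dot (Fin.append w a) (Fin.append x y) = dot w x + dot a y := by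
  simp [dot, Fin.sum_univ_add, Fin.append_left, Fin.append_right]

lemma dot_self_ne {n : ℕ} (x : Fin n → ℝ) (hx : x ≠ 0) : dot x x ≠ 0 := by
  intro h
  apply hx
  funext i
  have h0 := (Finset.sum_eq_zero_iff_of_nonneg (fun i _ => mul_self_nonneg (x i))).1 h
  have := h0 i (Finset.mem_univ i)
  simpa [mul_self_eq_zero] using this

lemma lemG {n : ℕ} (P : Finset (Fin n → ℝ)) (hP : ∀ x ∈ P, x ≠ 0) :
    ∃ g, ∀ x ∈ P, dot g x ≠ 0 := by
  classical
  induction P using Finset.induction_on with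
  | empty => exact ⟨0, by simp⟩
  | @insert a s ha ih =>
    obtain ⟨g, hg⟩ := ih (fun x hx => hP x (Finset.mem_insert_of_mem hx))
    have hane : a ≠ 0 := hP a (Finset.mem_insert_self a s)
    set B : Finset ℝ := (insert a s).image (fun q => -(dot g q) / (dot a q)) with hB
    obtain ⟨t, ht⟩ := Infinite.exists_notMem_finset B
    refine ⟨fun j => g j + t * a j, ?_⟩
    intro x hx
    rw [dot_perturb]
    by_cases hax : dot a x = 0
    · rw [hax, mul_zero, add_zero]
      rcases Finset.mem_insert.1 hx with rfl | hxs
      · exact absurd hax (dot_self_ne _ hane)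
      · exact hg x hxs
    · intro hcon
      apply ht
      rw [hB]
      refine Finset.mem_image.2 ⟨x, hx, ?_⟩
      field_simp
      linarith

lemma exists_avoid (B : Finset ℝ) {ε0 : ℝ} (h : 0 < ε0) :
    ∃ ε : ℝ, 0 < ε ∧ ε < ε0 ∧ ε ∉ B := by
  have hinf : (Set.Ioo (0:ℝ) ε0).Infinite := Set.Ioo_infinite h
  obtain ⟨ε, hmem⟩ := (hinf.diff B.finite_toSet).nonempty
  exact ⟨ε, hmem.1.1, hmem.1.2, by simpa using hmem.2⟩

lemma exists_delta (N : Finset ℝ) : ∃ δ : ℝ, 0 < δ ∧ ∀ x ∈ N, x < 0 → x + δ < 0 := by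
  classical
  by_cases hne : (N.filter (fun x => x < 0)).Nonempty
  · have hM0 : (N.filter (fun x => x < 0)).max' hne < 0 :=
      (Finset.mem_filter.1 ((N.filter (fun x => x < 0)).max'_mem hne)).2
    refine ⟨-((N.filter (fun x => x < 0)).max' hne)/2, by linarith, ?_⟩
    intro x hx hx0
    have hmem : x ∈ N.filter (fun x => x < 0) := Finset.mem_filter.2 ⟨hx, hx0⟩
    have : x ≤ (N.filter (fun x => x < 0)).max' hne := Finset.le_max' _ x hmem
    linarith
  · refine ⟨1, one_pos, ?_⟩
    intro x hx hx0
    exact absurd ⟨x, Finset.mem_filter.2 ⟨hx, hx0⟩⟩ hne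

lemma lemC (R : Finset ℝ) : ∀ c ≤ R.card, ∃ s : ℝ, (R.filter (fun x => s ≤ x)).card = c := by
  classical
  intro c
  induction c with
  | zero =>
    intro _
    obtain ⟨y, hy⟩ := R.finite_toSet.bddAbove
    refine ⟨y + 1, ?_⟩
    rw [Finset.card_eq_zero, Finset.filter_eq_empty_iff]
    intro x hx
    have : x ≤ y := hy (by simpa using hx)
    simp only [not_le]
    linarith
  | succ c ih =>
    intro hc
    obtain ⟨s, hs⟩ := ih (Nat.le_of_succ_le hc)
    have hsplit := Finset.card_filter_add_card_filter_not (s := R) (p := fun x => s ≤ x)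
    have hne : (R.filter (fun x => ¬ s ≤ x)).Nonempty := by
      rw [← Finset.card_pos]
      omega
    set M := (R.filter (fun x => ¬ s ≤ x)).max' hne with hM
    have hMmem := (R.filter (fun x => ¬ s ≤ x)).max'_mem hne
    have hMR : M ∈ R := (Finset.mem_filter.1 hMmem).1
    have hMs : ¬ s ≤ M := (Finset.mem_filter.1 hMmem).2
    refine ⟨M, ?_⟩
    have key : R.filter (fun x => M ≤ x) = insert M (R.filter (fun x => s ≤ x)) := by
      ext x
      simp only [Finset.mem_filter, Finset.mem_insert]
      constructor
      · rintro ⟨hxR, hMx⟩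
        by_cases hsx : s ≤ x
        · exact Or.inr ⟨hxR, hsx⟩
        · left
          have : x ≤ M := Finset.le_max' _ x (Finset.mem_filter.2 ⟨hxR, hsx⟩)
          linarith
      · rintro (rfl | ⟨hxR, hsx⟩)
        · exact ⟨hMR, le_refl _⟩
        · exact ⟨hxR, by linarith [not_le.1 hMs]⟩
    rw [key, Finset.card_insert_of_notMem (by simp [Finset.mem_filter, hMs]), hs]

lemma lemB {m k : ℕ} {u : Fin k → Fin m → ℝ} (hu : LinearIndependent ℝ u) (t : Fin k → ℝ) :
    ∃ w : Fin m → ℝ, ∀ i, dot w (u i) = t i := by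
  classical
  have hur : LinearIndepOn ℝ id (Set.range u) := (linearIndepOn_id_range_iff hu.injective).mpr hu
  set B := Module.Basis.extend hur with hB
  have hmem : ∀ i, u i ∈ hur.extend (Set.subset_univ _) :=
    fun i => hur.subset_extend _ ⟨i, rfl⟩
  set φ : (Fin m → ℝ) →ₗ[ℝ] ℝ := ∑ i : Fin k, t i • (B.coord ⟨u i, hmem i⟩) with hφ
  have hφu : ∀ i, φ (u i) = t i := by
    intro i
    rw [hφ]
    rw [LinearMap.sum_apply]
    have : ∀ j : Fin k, (t j • B.coord ⟨u j, hmem j⟩) (u i)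
        = if j = i then t j else 0 := by
      intro j
      rw [LinearMap.smul_apply, Module.Basis.coord_apply]
      have : u i = B ⟨u i, hmem i⟩ := (Module.Basis.extend_apply_self hur ⟨u i, hmem i⟩).symm
      rw [this, Module.Basis.repr_self]
      rw [Finsupp.single_apply]
      have hinj : (⟨u i, hmem i⟩ : hur.extend (Set.subset_univ _)) = ⟨u j, hmem j⟩ ↔ j = i := by
        constructor
        · intro h
          exact (hu.injective (congrArg Subtype.val h)).symm
        · rintro rfl; rfl
      by_cases hji : j = i
      · subst hji
        simp
      · rw [if_neg (fun h => hji (hinj.1 h)), if_neg hji, smul_eq_mul, mul_zero]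
    rw [Finset.sum_congr rfl (fun j _ => this j)]
    simp
  refine ⟨fun j => φ (fun l => if j = l then 1 else 0), ?_⟩
  intro i
  rw [← hφu i, LinearMap.pi_apply_eq_sum_univ φ (u i), dot]
  apply Finset.sum_congr rfl
  intro j _
  rw [smul_eq_mul, mul_comm]

lemma finset_min_pos {β : Type*} (s : Finset β) (q : β → ℝ) (hq : ∀ v ∈ s, 0 < q v) :
    ∃ ε0 : ℝ, 0 < ε0 ∧ ∀ v ∈ s, ε0 ≤ q v := by
  classical
  by_cases hne : s.Nonempty
  · have hne' : (s.image q).Nonempty := hne.image _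
    refine ⟨(s.image q).min' hne', ?_, ?_⟩
    · obtain ⟨v, hv, hvq⟩ := Finset.mem_image.1 ((s.image q).min'_mem hne')
      rw [← hvq]; exact hq v hv
    · intro v hv
      exact Finset.min'_le _ _ (Finset.mem_image_of_mem q hv)
  · exact ⟨1, one_pos, fun v hv => absurd ⟨v, hv⟩ hne⟩

lemma lemA {n : ℕ} (V₀ W : Finset (Fin n → ℝ)) (hVW : V₀ ⊆ W)
    (f : ↥(↑V₀ : Set (Fin n → ℝ)) → Bool) (a : Fin n → ℝ) (α : ℝ)
    (hf : ∀ x : ↥(↑V₀ : Set (Fin n → ℝ)), f x = true ↔ 0 ≤ dot a x + α) :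
    ∃ a' : Fin n → ℝ, ∃ α' : ℝ,
      (∀ x : ↥(↑V₀ : Set (Fin n → ℝ)), f x = true ↔ 0 ≤ dot a' x + α') ∧
      (∀ v ∈ W, ∀ w ∈ W, v ≠ w → dot a' v ≠ dot a' w) := by
  classical
  obtain ⟨g, hg⟩ := lemG (((W ×ˢ W).filter (fun p => p.1 ≠ p.2)).image (fun p => p.1 - p.2))
    (by
      intro x hx
      obtain ⟨p, hp, rfl⟩ := Finset.mem_image.1 hx
      exact sub_ne_zero.2 (Finset.mem_filter.1 hp).2)
  have hgdiff : ∀ v ∈ W, ∀ w ∈ W, v ≠ w → dot g (v - w) ≠ 0 := by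
    intro v hv w hw hvw
    exact hg _ (Finset.mem_image.2 ⟨(v, w),
      Finset.mem_filter.2 ⟨Finset.mem_product.2 ⟨hv, hw⟩, hvw⟩, rfl⟩)
  obtain ⟨δ, hδ0, hδ⟩ := exists_delta (V₀.image (fun v => dot a v + α))
  have hsign : ∀ v ∈ V₀, (0 ≤ dot a v + α ↔ 0 < dot a v + (α + δ)) ∧
      (¬ 0 ≤ dot a v + α → dot a v + (α + δ) < 0) := by
    intro v hv
    by_cases h0 : 0 ≤ dot a v + α
    · exact ⟨⟨fun _ => by linarith, fun _ => h0⟩, fun h => absurd h0 h⟩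
    · have hneg : dot a v + α < 0 := not_le.1 h0
      have h2 := hδ _ (Finset.mem_image_of_mem _ hv) hneg
      constructor
      · constructor
        · intro h; exact absurd h h0
        · intro h; linarith
      · intro _; linarith
  obtain ⟨ε0, hε0pos, hε0⟩ := finset_min_pos V₀
      (fun v => |dot a v + (α + δ)| / (|dot g v| + 1))
    (by
      intro v hv
      apply div_pos _ (by positivity)
      rw [abs_pos]
      intro h
      by_cases h0 : 0 ≤ dot a v + α
      · have := ((hsign v hv).1).1 h0; linarith
      · have := (hsign v hv).2 h0; linarith)
  obtain ⟨ε, hεpos, hεlt, hεB⟩ := exists_avoid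
    ((W ×ˢ W).image (fun p => -(dot a (p.1 - p.2)) / (dot g (p.1 - p.2)))) hε0pos
  refine ⟨fun j => a j + ε * g j, α + δ, ?_, ?_⟩
  · intro x
    obtain ⟨v, hv⟩ := x
    have hvV : v ∈ V₀ := by simpa using hv
    rw [hf]
    have hval : dot (fun j => a j + ε * g j) v = dot a v + ε * dot g v := dot_perturb a g v ε
    have hbound : |ε * dot g v| < |dot a v + (α + δ)| := by
      rw [abs_mul, abs_of_pos hεpos]
      calc ε * |dot g v| < ε0 * (|dot g v| + 1) := by
            apply mul_lt_mul' (le_of_lt hεlt) (by linarith) (abs_nonneg _) hε0pos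
        _ ≤ (|dot a v + (α + δ)| / (|dot g v| + 1)) * (|dot g v| + 1) := by
            apply mul_le_mul_of_nonneg_right (hε0 v hvV) (by positivity)
        _ = |dot a v + (α + δ)| := by field_simp
    simp only [hval]
    constructor
    · intro h0
      have := ((hsign v hvV).1).1 h0
      have h1 : dot a v + (α + δ) = |dot a v + (α + δ)| := (abs_of_pos this).symm
      have h2 : -(ε * dot g v) ≤ |ε * dot g v| := neg_le_abs _
      linarith
    · intro h0
      by_contra hne
      have := (hsign v hvV).2 hne
      have h1 : |dot a v + (α + δ)| = -(dot a v + (α + δ)) := abs_of_neg this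
      have h2 : ε * dot g v ≤ |ε * dot g v| := le_abs_self _
      linarith
  · intro v hv w hw hvw heq
    have h1 : dot (fun j => a j + ε * g j) v = dot a v + ε * dot g v := dot_perturb a g v ε
    have h2 : dot (fun j => a j + ε * g j) w = dot a w + ε * dot g w := dot_perturb a g w ε
    rw [h1, h2] at heq
    have hgd := hgdiff v hv w hw hvw
    rw [dot_sub] at hgd
    apply hεB
    refine Finset.mem_image.2 ⟨(v, w), Finset.mem_product.2 ⟨hv, hw⟩, ?_⟩
    rw [dot_sub, dot_sub]
    field_simp
    linarith

theorem stmt8 (m n k : ℕ) (hk : 0 < k) (u : Fin k → Fin m → ℝ)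
    (hu : LinearIndependent ℝ u) (V : Fin k → Finset (Fin n → ℝ)) :
    Nat.card ↥(thrFun (↑(V ⟨0, hk⟩) : Set (Fin n → ℝ))) *
        ∏ i ∈ Finset.univ.erase ⟨0, hk⟩, ((V i).card + 1) ≤
      Nat.card ↥(thrFun (⋃ i : Fin k,
        (fun v : Fin n → ℝ => Fin.append (u i) v) '' (↑(V i) : Set (Fin n → ℝ)))) := by
  classical
  set z : Fin k := ⟨0, hk⟩ with hz
  set S : Set (Fin (m + n) → ℝ) :=
    ⋃ i : Fin k, (fun v : Fin n → ℝ => Fin.append (u i) v) '' (↑(V i) : Set (Fin n → ℝ)) with hS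
  have hSfin : S.Finite := Set.finite_iUnion (fun i => ((V i).finite_toSet.image _))
  haveI : Finite ↥S := hSfin.to_subtype
  haveI : Finite ↥(thrFun S) := inferInstance
  have memS : ∀ (i : Fin k) (v : Fin n → ℝ), v ∈ V i → Fin.append (u i) v ∈ S := by
    intro i v hv
    rw [hS]
    exact Set.mem_iUnion.2 ⟨i, ⟨v, by simpa using hv, rfl⟩⟩
  set W : Finset (Fin n → ℝ) := Finset.univ.biUnion V with hW
  have memW : ∀ (i : Fin k) (v : Fin n → ℝ), v ∈ V i → v ∈ W := by
    intro i v hv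
    rw [hW]
    exact Finset.mem_biUnion.2 ⟨i, Finset.mem_univ i, hv⟩
  set T0 := ↥(thrFun (↑(V z) : Set (Fin n → ℝ))) with hT0
  -- choose perturbed witnesses for each threshold function on V z
  have choice1 : ∀ f : T0,
      ∃ p : (Fin n → ℝ) × ℝ,
        (∀ x : ↥(↑(V z) : Set (Fin n → ℝ)), f.1 x = true ↔ 0 ≤ dot p.1 x + p.2) ∧
        (∀ v ∈ W, ∀ w ∈ W, v ≠ w → dot p.1 v ≠ dot p.1 w) := by
    intro f
    obtain ⟨a, α, ha⟩ := f.2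
    obtain ⟨a', α', h1, h2⟩ := lemA (V z) W (fun v hv => memW z v hv) f.1 a α ha
    exact ⟨(a', α'), h1, h2⟩
  choose p hp1 hp2 using choice1
  -- choose thresholds
  have choice2 : ∀ (f : T0) (i : Fin k) (c : Fin ((V i).card + 1)),
      ∃ s : ℝ, (((V i).image (fun v => dot (p f).1 v + (p f).2)).filter
        (fun x => s ≤ x)).card = (c : ℕ) := by
    intro f i c
    apply lemC
    have hcard : ((V i).image (fun v => dot (p f).1 v + (p f).2)).card = (V i).card := by
      apply Finset.card_image_of_injOn
      intro v hv w hw hvw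
      by_contra hne
      apply hp2 f v (memW i v (Finset.mem_coe.1 hv)) w (memW i w (Finset.mem_coe.1 hw)) hne
      have h' := hvw
      simp only at h'
      linarith
    rw [hcard]
    exact Nat.lt_succ_iff.1 c.2
  choose sel hsel using choice2
  set Cc := (∀ i : {i : Fin k // i ≠ z}, Fin ((V i.1).card + 1)) with hCc
  -- choose dual vectors
  set tfun : T0 → Cc → Fin k → ℝ := fun f c i =>
    if h : i = z then 0 else -(sel f i (c ⟨i, h⟩)) with htfun
  have choice3 : ∀ (f : T0) (c : Cc), ∃ w : Fin m → ℝ, ∀ i, dot w (u i) = tfun f c i :=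
    fun f c => lemB hu (tfun f c)
  choose wsel hwsel using choice3
  -- the injection
  set A : T0 → Cc → (Fin (m + n) → ℝ) := fun f c => Fin.append (wsel f c) (p f).1 with hA
  set Φ : T0 × Cc → ↥(thrFun S) := fun fc =>
    ⟨fun x => decide (0 ≤ dot (A fc.1 fc.2) x.1 + (p fc.1).2),
     ⟨A fc.1 fc.2, (p fc.1).2, fun x => by simp⟩⟩ with hΦ
  -- value of Φ at points of slab i
  have val : ∀ (f : T0) (c : Cc) (i : Fin k) (v : Fin n → ℝ) (hv : v ∈ V i),
      (Φ (f, c)).1 ⟨Fin.append (u i) v, memS i v hv⟩ =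
        decide (0 ≤ tfun f c i + (dot (p f).1 v + (p f).2)) := by
    intro f c i v hv
    have harg : dot (A f c) (Fin.append (u i) v) + (p f).2
        = tfun f c i + (dot (p f).1 v + (p f).2) := by
      rw [hA]
      simp only
      rw [dot_append, hwsel]
      ring
    simp only [hΦ]
    rw [harg]
  -- recovery of f
  have recf : ∀ (f : T0) (c : Cc) (v : ↥(↑(V z) : Set (Fin n → ℝ))),
      (Φ (f, c)).1 ⟨Fin.append (u z) v.1, memS z v.1 (by simpa using v.2)⟩ = f.1 v := by
    intro f c v
    rw [val f c z v.1 (by simpa using v.2)]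
    have ht : tfun f c z = 0 := by rw [htfun]; simp
    rw [ht, zero_add]
    have hiff := hp1 f v
    by_cases hfv : f.1 v = true
    · rw [hfv]
      exact decide_eq_true (hiff.1 hfv)
    · have hnot : ¬ (0 ≤ dot (p f).1 v.1 + (p f).2) := fun hc => hfv (hiff.2 hc)
      rw [decide_eq_false hnot]
      exact (Bool.eq_false_iff.2 hfv).symm
  -- counting function
  set cnt : ↥(thrFun S) → Fin k → ℕ := fun F i =>
    ((V i).attach.filter (fun v => F.1 ⟨Fin.append (u i) v.1, memS i v.1 v.2⟩ = true)).card
    with hcnt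
  have reccnt : ∀ (f : T0) (c : Cc) (i : {i : Fin k // i ≠ z}),
      cnt (Φ (f, c)) i.1 = (c i : ℕ) := by
    intro f c i
    rw [hcnt]
    simp only
    have hpred : ∀ v : {x // x ∈ V i.1},
        ((Φ (f, c)).1 ⟨Fin.append (u i.1) v.1, memS i.1 v.1 v.2⟩ = true)
          ↔ (sel f i.1 (c i) ≤ dot (p f).1 v.1 + (p f).2) := by
      intro v
      rw [val f c i.1 v.1 v.2, decide_eq_true_eq]
      have ht : tfun f c i.1 = -(sel f i.1 (c i)) := by
        simp only [htfun]
        rw [dif_neg i.2]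
      rw [ht]
      constructor <;> intro h <;> linarith
    rw [Finset.filter_congr (fun v _ => hpred v)]
    rw [← hsel f i.1 (c i)]
    apply Finset.card_bij (fun (v : {x // x ∈ V i.1}) _ => dot (p f).1 v.1 + (p f).2)
    · intro a ha
      have hle := (Finset.mem_filter.1 ha).2
      exact Finset.mem_filter.2 ⟨Finset.mem_image_of_mem _ a.2, hle⟩
    · intro a _ b _ hab
      apply Subtype.ext
      by_contra hne
      exact hp2 f a.1 (memW i.1 a.1 a.2) b.1 (memW i.1 b.1 b.2) hne (by linarith)
    · intro b hb
      obtain ⟨hbim, hble⟩ := Finset.mem_filter.1 hb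
      obtain ⟨v, hv, hvb⟩ := Finset.mem_image.1 hbim
      refine ⟨⟨v, hv⟩, ?_, hvb⟩
      refine Finset.mem_filter.2 ⟨Finset.mem_attach _ _, ?_⟩
      rw [hvb]
      exact hble
  -- injectivity
  have hinj : Function.Injective Φ := by
    rintro ⟨f, c⟩ ⟨g, d⟩ h
    have hfg : f = g := by
      apply Subtype.ext
      funext v
      have h1 := recf f c v
      have h2 := recf g d v
      rw [← h1, ← h2]
      exact congrFun (congrArg Subtype.val h) _
    subst hfg
    have hcd : c = d := by
      funext i
      apply Fin.ext
      rw [← reccnt f c i, ← reccnt f d i, h]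
    rw [hcd]
  -- cardinality bookkeeping
  have hle := Nat.card_le_card_of_injective Φ hinj
  have hdom : Nat.card (T0 × Cc)
      = Nat.card T0 * ∏ i ∈ Finset.univ.erase z, ((V i).card + 1) := by
    rw [Nat.card_prod]
    congr 1
    calc Nat.card Cc = ∏ i : {i : Fin k // i ≠ z}, ((V i.1).card + 1) := by
          rw [hCc, Nat.card_pi]
          simp
      _ = ∏ i ∈ Finset.univ.erase z, ((V i).card + 1) :=
          (Finset.prod_subtype (Finset.univ.erase z) (p := fun i : Fin k => i ≠ z)
            (fun x => by simp) (fun i => (V i).card + 1)).symm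
  rw [← hdom]
  exact hle
end

section
/- Let U ⊂ R^m be a linearly independent finite set with |U| ≥ 2, and let S_p = U ⊕ ... ⊕ U ⊂ R^{pm} be the direct-sum product of p ≥ 2 copies of U. Then C(S_p) ≥ (1/8)·p²·|U|·log₂|U|. -/
/-- dual vectors: any function on a linearly independent finite set is realized by a dot product -/
lemma exists_dual {m : ℕ} (U : Finset (Fin m → ℝ))
    (hU : LinearIndependent ℝ (fun u : (↑U : Set (Fin m → ℝ)) => (u : Fin m → ℝ)))
    (φ : (↑U : Set (Fin m → ℝ)) → ℝ) :
    ∃ a : Fin m → ℝ, ∀ u : (↑U : Set (Fin m → ℝ)), dot a (u : Fin m → ℝ) = φ u := by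
  classical
  have hU' : LinearIndepOn ℝ id (↑U : Set (Fin m → ℝ)) := hU
  let B := Module.Basis.extend hU'
  let ψ : hU'.extend (Set.subset_univ _) → ℝ := fun b =>
    if h : (b : Fin m → ℝ) ∈ (↑U : Set (Fin m → ℝ)) then φ ⟨b, h⟩ else 0
  let l : (Fin m → ℝ) →ₗ[ℝ] ℝ := B.constr ℝ ψ
  refine ⟨fun i => l (fun j => if i = j then 1 else 0), fun u => ?_⟩
  have hdot : dot (fun i => l (fun j => if i = j then 1 else 0)) (u : Fin m → ℝ)
      = l (u : Fin m → ℝ) := by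
    rw [LinearMap.pi_apply_eq_sum_univ l (u : Fin m → ℝ), dot]
    simp [mul_comm, smul_eq_mul]
  rw [hdot]
  have hmem : (u : Fin m → ℝ) ∈ hU'.extend (Set.subset_univ _) :=
    hU'.subset_extend _ u.2
  have : l (B ⟨(u : Fin m → ℝ), hmem⟩) = ψ ⟨(u : Fin m → ℝ), hmem⟩ :=
    Module.Basis.constr_basis B ℝ ψ _
  rw [Module.Basis.extend_apply_self] at this
  rw [this]
  simp only [ψ]
  rw [dif_pos u.2]

lemma key_nat (N c c' : ℕ) (hc : c < N) (hc' : c' < N)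
    (h : ∀ v, v < N → (N ≤ c + v ↔ N ≤ c' + v)) : c = c' := by
  have h1 := h (N - 1 - c) (by omega)
  have h2 := h (N - 1 - c') (by omega)
  omega

lemma card_ineq (q r n : ℕ) (h1 : 1 ≤ q) (hqr : q ≤ r) (hrq : r ≤ q + 1) (hn : 2 ≤ n) :
    (q + r) ^ 2 * n ≤ 8 * (r * (q * (n - 1) + 1)) := by
  obtain ⟨k, rfl⟩ : ∃ k, n = k + 2 := ⟨n - 2, by omega⟩
  have hsub : k + 2 - 1 = k + 1 := by omega
  rw [hsub]
  have t1 : k * 1 ≤ k * q := Nat.mul_le_mul_left k h1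
  have t2 : (k * q) * 1 ≤ (k * q) * q := Nat.mul_le_mul_left (k * q) h1
  obtain rfl | rfl : r = q ∨ r = q + 1 := by omega
  · nlinarith
  · nlinarith

theorem stmt10 (m p : ℕ) (hp : 2 ≤ p) (U : Finset (Fin m → ℝ)) (hU2 : 2 ≤ U.card)
    (hU : LinearIndependent ℝ (fun u : (↑U : Set (Fin m → ℝ)) => (u : Fin m → ℝ))) :
    (1 / 8 : ℝ) * p ^ 2 * U.card * Real.logb 2 U.card ≤
      Cap {x : Fin (p * m) → ℝ |
        ∀ i : Fin p, (fun j : Fin m => x (finProdFinEquiv (i, j))) ∈ (↑U : Set (Fin m → ℝ))} := by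
  classical
  set n := U.card with hn
  set S : Set (Fin (p * m) → ℝ) := {x : Fin (p * m) → ℝ |
      ∀ i : Fin p, (fun j : Fin m => x (finProdFinEquiv (i, j))) ∈ (↑U : Set (Fin m → ℝ))}
    with hSdef
  set q := p / 2 with hqdef
  set r := p - p / 2 with hrdef
  have hq : 1 ≤ q := by omega
  have hr1 : 1 ≤ r := by omega
  have hqr : q + r = p := by omega
  -- basics
  let Ut := (↑U : Set (Fin m → ℝ))
  have hUne : U.Nonempty := Finset.card_pos.mp (by omega)
  let idx : Ut ≃ Fin n :=
    (Equiv.subtypeEquivRight (fun x => by simp [Ut])).trans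
      (Fintype.equivFinOfCardEq (Fintype.card_coe U))
  obtain ⟨u₀v, hu₀⟩ := hUne
  let u₀ : Ut := ⟨u₀v, by simpa [Ut] using hu₀⟩
  let v₀ : Fin n := idx u₀
  let E2 : Fin q ⊕ Fin r ≃ Fin p := finSumFinEquiv.trans (finCongr hqr)
  -- point construction
  let pt : (Fin q → Ut) → (Fin r → Ut) → (Fin (p * m) → ℝ) := fun y z k =>
    (Sum.elim (fun iq => (y iq : Fin m → ℝ)) (fun kr => (z kr : Fin m → ℝ))
      (E2.symm (finProdFinEquiv.symm k).1)) ((finProdFinEquiv.symm k).2)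
  have pt_mem : ∀ y z, pt y z ∈ S := by
    intro y z i
    have hblk : (fun j : Fin m => pt y z (finProdFinEquiv (i, j)))
        = (Sum.elim (fun iq => ((y iq : Fin m → ℝ))) (fun kr => ((z kr : Fin m → ℝ)))
            (E2.symm i)) := by
      funext j; simp only [pt, Equiv.symm_apply_apply]
    rw [hblk]
    rcases E2.symm i with a | b
    · exact (y a).2
    · exact (z b).2
  -- evaluation of dot products at constructed points
  have dot_pt : ∀ (A : Fin p → Fin m → ℝ) (y : Fin q → Ut) (z : Fin r → Ut),
      dot (fun k => A (finProdFinEquiv.symm k).1 (finProdFinEquiv.symm k).2) (pt y z)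
        = ∑ i : Fin p, dot (A i)
            (Sum.elim (fun iq => ((y iq : Fin m → ℝ))) (fun kr => ((z kr : Fin m → ℝ)))
              (E2.symm i)) := by
    intro A y z
    rw [dot]
    rw [← Equiv.sum_comp (finProdFinEquiv : Fin p × Fin m ≃ Fin (p * m))
      (fun k => A (finProdFinEquiv.symm k).1 (finProdFinEquiv.symm k).2 * pt y z k)]
    rw [Fintype.sum_prod_type]
    refine Finset.sum_congr rfl fun i _ => ?_
    rw [dot]
    refine Finset.sum_congr rfl fun j _ => ?_
    simp only [pt, Equiv.symm_apply_apply]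
  have sum_split : ∀ (g : Fin q → ℝ) (h : Fin r → ℝ),
      (∑ i : Fin p, Sum.elim g h (E2.symm i)) = (∑ iq, g iq) + (∑ kr, h kr) := by
    intro g h
    rw [← Equiv.sum_comp E2 (fun i => Sum.elim g h (E2.symm i))]
    simp [Fintype.sum_sum_type]
  -- main existence lemma for threshold functions from block data
  have exists_f : ∀ (φ : Fin q → Ut → ℝ) (ψ : Fin r → Ut → ℝ) (α : ℝ),
      ∃ f : ↥(thrFun S), ∀ (y : Fin q → Ut) (z : Fin r → Ut),
        (f : S → Bool) ⟨pt y z, pt_mem y z⟩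
          = decide (0 ≤ (∑ iq, φ iq (y iq)) + (∑ kr, ψ kr (z kr)) + α) := by
    intro φ ψ α
    choose A hA using fun s : Fin q ⊕ Fin r =>
      exists_dual U hU (Sum.elim φ ψ s)
    let a : Fin (p * m) → ℝ := fun k =>
      A (E2.symm (finProdFinEquiv.symm k).1) (finProdFinEquiv.symm k).2
    have hval : ∀ (y : Fin q → Ut) (z : Fin r → Ut),
        dot a (pt y z) = (∑ iq, φ iq (y iq)) + (∑ kr, ψ kr (z kr)) := by
      intro y z
      have := dot_pt (fun i => A (E2.symm i)) y z
      rw [this]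
      rw [← sum_split (fun iq => φ iq (y iq)) (fun kr => ψ kr (z kr))]
      refine Finset.sum_congr rfl fun i _ => ?_
      rcases hs : E2.symm i with s | s <;> simp [hs, hA]
    refine ⟨⟨fun x => decide (0 ≤ dot a (x : Fin (p * m) → ℝ) + α), ?_⟩, ?_⟩
    · exact ⟨a, α, fun x => by simp⟩
    · intro y z
      simp only [hval y z]
  -- specific data
  set N := n ^ r with hNdef
  let ψ0 : Fin r → Ut → ℝ := fun k u => ((idx u : ℕ) : ℝ) * (n : ℝ) ^ (k : ℕ)
  let zv : Fin N → (Fin r → Ut) := fun v k => idx.symm ((finFunctionFinEquiv.symm v) k)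
  have hzv : ∀ v : Fin N, (∑ kr, ψ0 kr (zv v kr)) = ((v : ℕ) : ℝ) := by
    intro v
    have h2 : ((finFunctionFinEquiv (finFunctionFinEquiv.symm v) : Fin (n ^ r)) : ℕ)
        = ∑ kr : Fin r, ((finFunctionFinEquiv.symm v kr : ℕ)) * n ^ (kr : ℕ) :=
      finFunctionFinEquiv_apply _
    rw [Equiv.apply_symm_apply] at h2
    simp only [ψ0, zv, Equiv.apply_symm_apply]
    exact_mod_cast h2.symm
  -- parameter space
  let PT := ((Fin q × {v : Fin n // v ≠ v₀}) → Fin N) × Fin N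
  let φc : PT → Fin q → Ut → ℝ := fun c i u =>
    if h : idx u = v₀ then 0 else ((c.1 (i, ⟨idx u, h⟩) : ℕ) : ℝ) - ((c.2 : ℕ) : ℝ)
  let αc : PT → ℝ := fun c => ((c.2 : ℕ) : ℝ) - (N : ℝ)
  let yrow : Fin q → Ut → (Fin q → Ut) := fun i0 w i => if i = i0 then w else u₀
  have hrow0 : ∀ c : PT, (∑ iq, φc c iq u₀) = 0 := by
    intro c
    refine Finset.sum_eq_zero fun i _ => ?_
    simp [φc, v₀]
  have hrow : ∀ (c : PT) (i0 : Fin q) (w : Ut) (h : idx w ≠ v₀),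
      (∑ iq, φc c iq (yrow i0 w iq))
        = ((c.1 (i0, ⟨idx w, h⟩) : ℕ) : ℝ) - ((c.2 : ℕ) : ℝ) := by
    intro c i0 w h
    rw [Fintype.sum_eq_single i0]
    · simp only [yrow, if_pos rfl, φc, dif_neg h]
    · intro i hi
      simp [yrow, if_neg hi, φc, v₀]
  -- the injection
  choose F hF using fun c : PT => exists_f (φc c) ψ0 (αc c)
  have real_iff : ∀ t v : ℕ, ((0:ℝ) ≤ (t : ℝ) + (v : ℝ) - (N : ℝ) ↔ N ≤ t + v) := by
    intro t v
    rw [sub_nonneg]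
    constructor <;> intro h <;> exact_mod_cast h
  have hinj : Function.Injective F := by
    intro c₁ c₂ hEq
    have hfun : ∀ (y : Fin q → Ut) (z : Fin r → Ut),
        ((0:ℝ) ≤ (∑ iq, φc c₁ iq (y iq)) + (∑ kr, ψ0 kr (z kr)) + αc c₁
          ↔ (0:ℝ) ≤ (∑ iq, φc c₂ iq (y iq)) + (∑ kr, ψ0 kr (z kr)) + αc c₂) := by
      intro y z
      have h3 : ((F c₁ : S → Bool)) ⟨pt y z, pt_mem y z⟩
          = ((F c₂ : S → Bool)) ⟨pt y z, pt_mem y z⟩ := by rw [hEq]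
      rw [hF c₁ y z, hF c₂ y z] at h3
      exact decide_eq_decide.mp h3
    have ht0 : c₁.2 = c₂.2 := by
      apply Fin.ext
      apply key_nat N _ _ c₁.2.isLt c₂.2.isLt
      intro v hv
      have hv' := hfun (fun _ => u₀) (zv ⟨v, hv⟩)
      rw [hrow0 c₁, hrow0 c₂, hzv ⟨v, hv⟩] at hv'
      rw [show (0:ℝ) + (((⟨v, hv⟩ : Fin N) : ℕ) : ℝ) + αc c₁
            = ((c₁.2 : ℕ) : ℝ) + (v : ℝ) - (N : ℝ) from by simp only [αc]; push_cast; ring,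
          show (0:ℝ) + (((⟨v, hv⟩ : Fin N) : ℕ) : ℝ) + αc c₂
            = ((c₂.2 : ℕ) : ℝ) + (v : ℝ) - (N : ℝ) from by simp only [αc]; push_cast; ring,
          real_iff, real_iff] at hv'
      exact hv'
    have ht : c₁.1 = c₂.1 := by
      funext x
      obtain ⟨i0, vl⟩ := x
      apply Fin.ext
      apply key_nat N _ _ (c₁.1 (i0, vl)).isLt (c₂.1 (i0, vl)).isLt
      intro v hv
      set w : Ut := idx.symm vl.1 with hwdef
      have hw : idx w = vl.1 := Equiv.apply_symm_apply idx vl.1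
      have hwne : idx w ≠ v₀ := by rw [hw]; exact vl.2
      have hvl : (⟨idx w, hwne⟩ : {v : Fin n // v ≠ v₀}) = vl := Subtype.ext hw
      have hv' := hfun (yrow i0 w) (zv ⟨v, hv⟩)
      rw [hrow c₁ i0 w hwne, hrow c₂ i0 w hwne, hzv ⟨v, hv⟩, hvl] at hv'
      rw [show (((c₁.1 (i0, vl) : ℕ) : ℝ) - ((c₁.2 : ℕ) : ℝ)) + (((⟨v, hv⟩ : Fin N) : ℕ) : ℝ) + αc c₁
            = ((c₁.1 (i0, vl) : ℕ) : ℝ) + (v : ℝ) - (N : ℝ) from by simp only [αc]; push_cast; ring,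
          show (((c₂.1 (i0, vl) : ℕ) : ℝ) - ((c₂.2 : ℕ) : ℝ)) + (((⟨v, hv⟩ : Fin N) : ℕ) : ℝ) + αc c₂
            = ((c₂.1 (i0, vl) : ℕ) : ℝ) + (v : ℝ) - (N : ℝ) from by simp only [αc]; push_cast; ring,
          real_iff, real_iff] at hv'
      exact hv'
    exact Prod.ext ht ht0
  -- finiteness
  haveI : Finite Ut := (U.finite_toSet).to_subtype
  haveI hfinS : Finite ↥S := by
    apply Finite.of_injective (fun x : ↥S =>
      (fun i : Fin p => (⟨fun j => (x : Fin (p * m) → ℝ) (finProdFinEquiv (i, j)), x.2 i⟩ : Ut)))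
    intro x x' h
    apply Subtype.ext
    funext k
    have hk := congrArg (fun g => (g (finProdFinEquiv.symm k).1 : Fin m → ℝ)
      (finProdFinEquiv.symm k).2) h
    simpa only [Prod.mk.eta, Equiv.apply_symm_apply] using hk
  haveI : Finite ↥(thrFun S) := Subtype.finite
  -- cardinality bound
  have hcard : n ^ (r * (q * (n - 1) + 1)) ≤ Nat.card ↥(thrFun S) := by
    have h1 : Nat.card PT ≤ Nat.card ↥(thrFun S) := Nat.card_le_card_of_injective F hinj
    have hsub : Fintype.card {v : Fin n // v ≠ v₀} = n - 1 := by
      have h := Fintype.card_subtype_compl (fun v : Fin n => v = v₀)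
      simp only [Fintype.card_subtype_eq, Fintype.card_fin] at h
      exact h
    have h2 : Nat.card PT = N ^ (q * (n - 1)) * N := by
      rw [Nat.card_prod, Nat.card_fun]
      simp only [Nat.card_eq_fintype_card, Fintype.card_prod, Fintype.card_fin, hsub]
    have h3 : N ^ (q * (n - 1)) * N = n ^ (r * (q * (n - 1) + 1)) := by
      rw [hNdef, ← pow_mul, ← pow_add, Nat.mul_succ]
    rw [← h3, ← h2]
    exact h1
  -- final log computation
  have hn1 : (1:ℝ) ≤ (n : ℝ) := by exact_mod_cast (by omega : 1 ≤ n)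
  have hlogb : (0:ℝ) ≤ Real.logb 2 n := Real.logb_nonneg (by norm_num) hn1
  have hmono : Real.logb 2 ((n : ℝ) ^ (r * (q * (n - 1) + 1)))
      ≤ Real.logb 2 (Nat.card ↥(thrFun S)) := by
    apply Real.logb_le_logb_of_le (b := 2) (by norm_num) (by positivity)
    exact_mod_cast hcard
  rw [Real.logb_pow] at hmono
  have hK : (1/8 : ℝ) * (p:ℝ) ^ 2 * (n:ℝ) ≤ ((r * (q * (n - 1) + 1) : ℕ) : ℝ) := by
    have h := card_ineq q r n hq (by omega) (by omega) hU2
    rw [hqr] at h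
    have h' : ((p ^ 2 * n : ℕ) : ℝ) ≤ ((8 * (r * (q * (n - 1) + 1)) : ℕ) : ℝ) :=
      Nat.cast_le.mpr h
    push_cast at h'
    push_cast
    linarith
  calc (1 / 8 : ℝ) * p ^ 2 * n * Real.logb 2 n
      ≤ ((r * (q * (n - 1) + 1) : ℕ) : ℝ) * Real.logb 2 n :=
        mul_le_mul_of_nonneg_right hK hlogb
    _ ≤ Real.logb 2 (Nat.card ↥(thrFun S)) := hmono
    _ = Cap S := rfl
end

section
/- If A and B are totally separated subsets of a finite set S ⊂ R^n (i.e., A and B lie in two distinct parallel affine hyperplanes), then |T(S)| ≥ |T(A)| · (|B| + 1). -/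
lemma dot_add {n : ℕ} (a b x : Fin n → ℝ) : dot (a + b) x = dot a x + dot b x := by
  simp [dot, add_mul, Finset.sum_add_distrib]

lemma dot_smul {n : ℕ} (c : ℝ) (a x : Fin n → ℝ) : dot (c • a) x = c * dot a x := by
  simp [dot, Finset.mul_sum, mul_assoc]

lemma dot_sub_right {n : ℕ} (w x y : Fin n → ℝ) : dot w (x - y) = dot w x - dot w y := by
  simp [dot, mul_sub, Finset.sum_sub_distrib]

lemma dot_self_ne_zero {n : ℕ} (d : Fin n → ℝ) (hd : d ≠ 0) : dot d d ≠ 0 := by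
  intro h
  apply hd
  funext i
  have h2 := (Finset.sum_eq_zero_iff_of_nonneg (fun i _ => mul_self_nonneg (d i))).mp h i (Finset.mem_univ i)
  simpa [mul_self_eq_zero] using h2

lemma avoid {n : ℕ} (D : Finset (Fin n → ℝ)) (hD : ∀ d ∈ D, d ≠ 0) :
    ∃ w, ∀ d ∈ D, dot w d ≠ 0 := by
  classical
  induction D using Finset.induction_on with
  | empty => exact ⟨0, by simp⟩
  | @insert d D hdD ih =>
    obtain ⟨w, hw⟩ := ih (fun e he => hD e (Finset.mem_insert_of_mem he))
    have hd : d ≠ 0 := hD d (Finset.mem_insert_self d D)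
    set Bad : Finset ℝ := (insert d D).image (fun e => -(dot w e) / dot d e) with hBad
    obtain ⟨t, ht⟩ := Infinite.exists_notMem_finset Bad
    refine ⟨w + t • d, ?_⟩
    intro e he
    rw [dot_add, dot_smul]
    intro hcontra
    by_cases hde : dot d e = 0
    · rw [hde, mul_zero, add_zero] at hcontra
      rcases Finset.mem_insert.mp he with rfl | heD
      · exact dot_self_ne_zero e hd hde
      · exact hw e heD hcontra
    · apply ht
      rw [hBad]
      refine Finset.mem_image.mpr ⟨e, he, ?_⟩
      field_simp
      linarith

lemma exists_sep {n : ℕ} (B : Finset (Fin n → ℝ)) :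
    ∃ w, ∀ x ∈ B, ∀ y ∈ B, x ≠ y → dot w x ≠ dot w y := by
  classical
  obtain ⟨w, hw⟩ := avoid (((B ×ˢ B).filter fun p => p.1 ≠ p.2).image fun p => p.1 - p.2)
    (by
      intro d hd
      obtain ⟨p, hp, rfl⟩ := Finset.mem_image.mp hd
      have := (Finset.mem_filter.mp hp).2
      exact sub_ne_zero_of_ne this)
  refine ⟨w, fun x hx y hy hxy h => ?_⟩
  have : dot w (x - y) ≠ 0 := hw _ (Finset.mem_image.mpr ⟨(x, y), Finset.mem_filter.mpr
    ⟨Finset.mem_product.mpr ⟨hx, hy⟩, hxy⟩, rfl⟩)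
  rw [dot_sub_right] at this
  exact this (by linarith)

lemma exists_threshold_count {X : Type*} [DecidableEq X] (C : Finset X) (u : X → ℝ)
    (hu : ∀ x ∈ C, ∀ y ∈ C, x ≠ y → u x ≠ u y) :
    ∀ k, k ≤ C.card → ∃ t : ℝ, (C.filter fun x => t ≤ u x).card = k := by
  classical
  intro k
  induction k with
  | zero =>
    intro _
    rcases C.eq_empty_or_nonempty with rfl | hC
    · exact ⟨0, by simp⟩
    · refine ⟨C.sup' hC u + 1, ?_⟩
      rw [Finset.card_eq_zero, Finset.filter_eq_empty_iff]
      intro x hx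
      have := Finset.le_sup' u hx
      push_neg
      linarith
  | succ k ih =>
    intro hk
    obtain ⟨t, ht⟩ := ih (Nat.le_of_succ_le hk)
    set G := C.filter fun x => t ≤ u x with hG
    set L := C.filter fun x => ¬ t ≤ u x with hL
    have hsum : G.card + L.card = C.card := Finset.card_filter_add_card_filter_not _
    have hLne : L.Nonempty := by
      rw [← Finset.card_pos]
      omega
    obtain ⟨x0, hx0L, hx0⟩ := Finset.exists_mem_eq_sup' hLne u
    have hx0C : x0 ∈ C := (Finset.mem_filter.mp hx0L).1
    have hx0lt : u x0 < t := by
      have := (Finset.mem_filter.mp hx0L).2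
      linarith [not_le.mp this]
    refine ⟨u x0, ?_⟩
    have hfe : C.filter (fun x => u x0 ≤ u x) = insert x0 G := by
      ext x
      simp only [Finset.mem_filter, Finset.mem_insert, hG]
      constructor
      · rintro ⟨hxC, hxge⟩
        by_cases hxt : t ≤ u x
        · exact Or.inr ⟨hxC, hxt⟩
        · left
          have hxL : x ∈ L := Finset.mem_filter.mpr ⟨hxC, hxt⟩
          have : u x ≤ u x0 := hx0 ▸ Finset.le_sup' u hxL
          by_contra hne
          exact hu x hxC x0 hx0C hne (le_antisymm this hxge)
      · rintro (rfl | ⟨hxC, hxt⟩)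
        · exact ⟨hx0C, le_refl _⟩
        · exact ⟨hxC, by linarith⟩
    rw [hfe, Finset.card_insert_of_notMem (by
      simp only [hG, Finset.mem_filter]
      push_neg
      intro _
      linarith), ht]

lemma goodWitness {n : ℕ} (A B : Finset (Fin n → ℝ)) (w : Fin n → ℝ)
    (hw : ∀ x ∈ B, ∀ y ∈ B, x ≠ y → dot w x ≠ dot w y)
    (g : (↑A : Set (Fin n → ℝ)) → Bool)
    (hg : g ∈ thrFun (↑A : Set (Fin n → ℝ))) :
    ∃ a α, (∀ x : (↑A : Set (Fin n → ℝ)),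
        (g x = true ↔ 0 < dot a ↑x + α) ∧ dot a ↑x + α ≠ 0) ∧
      (∀ x ∈ B, ∀ y ∈ B, x ≠ y → dot a x + α ≠ dot a y + α) := by
  classical
  obtain ⟨a0, α0, h0⟩ := hg
  -- Step 1: make strict
  set N := A.filter (fun x => dot a0 x + α0 < 0) with hN
  set δ : ℝ := if h : N.Nonempty then (N.inf' h fun x => -(dot a0 x + α0)) / 2 else 1 with hδ
  have hδpos : 0 < δ := by
    rw [hδ]
    split_ifs with h
    · have : 0 < N.inf' h fun x => -(dot a0 x + α0) := by
        rw [Finset.lt_inf'_iff]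
        intro x hx
        have := (Finset.mem_filter.mp hx).2
        linarith
      linarith
    · norm_num
  have hδlt : ∀ x ∈ N, δ < -(dot a0 x + α0) := by
    intro x hx
    have hne : N.Nonempty := ⟨x, hx⟩
    rw [hδ, dif_pos hne]
    have h1 : (N.inf' hne fun x => -(dot a0 x + α0)) ≤ -(dot a0 x + α0) :=
      Finset.inf'_le _ hx
    have h2 : 0 < N.inf' hne fun x => -(dot a0 x + α0) := by
      rw [Finset.lt_inf'_iff]
      intro y hy
      have := (Finset.mem_filter.mp hy).2
      linarith
    linarith
  set α1 := α0 + δ with hα1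
  have step1 : ∀ x : (↑A : Set (Fin n → ℝ)), (g x = true ↔ 0 < dot a0 ↑x + α1) := by
    intro x
    rw [h0 x, hα1]
    constructor
    · intro h; linarith
    · intro h
      by_contra hc
      push_neg at hc
      have hxN : (x : Fin n → ℝ) ∈ N := Finset.mem_filter.mpr ⟨Finset.mem_coe.mp x.2, by linarith⟩
      have := hδlt _ hxN
      linarith
  -- Step 2: perturb to break ties on B
  set δ2 : ℝ := if h : A.Nonempty then
      A.inf' h (fun x => |dot a0 x + α1| / (|dot w x| + 1)) else 1 with hδ2
  have habs : ∀ x ∈ A, 0 < |dot a0 x + α1| := by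
    intro x hx
    rcases (step1 ⟨x, Finset.mem_coe.mpr hx⟩).mpr with _
    by_cases hgx : g ⟨x, Finset.mem_coe.mpr hx⟩ = true
    · have := (step1 ⟨x, Finset.mem_coe.mpr hx⟩).mp hgx
      simpa using abs_pos.mpr (by linarith : dot a0 x + α1 ≠ 0)
    · have h1 : ¬ (0 < dot a0 x + α1) := fun h => hgx ((step1 _).mpr h)
      have h2 : dot a0 x + α0 < 0 := by
        by_contra hc
        push_neg at hc
        apply h1
        rw [hα1]; linarith
      have := hδlt x (Finset.mem_filter.mpr ⟨hx, h2⟩)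
      have : dot a0 x + α1 < 0 := by rw [hα1]; linarith
      exact abs_pos.mpr (by linarith)
  have hδ2pos : 0 < δ2 := by
    rw [hδ2]
    split_ifs with h
    · rw [Finset.lt_inf'_iff]
      intro x hx
      have h1 := habs x hx
      have h2 : (0:ℝ) < |dot w x| + 1 := by positivity
      positivity
    · norm_num
  have hδ2le : ∀ x ∈ A, δ2 ≤ |dot a0 x + α1| / (|dot w x| + 1) := by
    intro x hx
    rw [hδ2, dif_pos ⟨x, hx⟩]
    exact Finset.inf'_le _ hx
  set Bad : Finset ℝ := ((B ×ˢ B).filter fun p => p.1 ≠ p.2).image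
      (fun p => (dot a0 p.2 - dot a0 p.1) / (dot w p.1 - dot w p.2)) with hBad
  obtain ⟨ε, hεI, hεBad⟩ := (Set.Ioo_infinite hδ2pos).exists_notMem_finset Bad
  obtain ⟨hε0, hεδ2⟩ := hεI
  refine ⟨a0 + ε • w, α1, ?_, ?_⟩
  · intro x
    rw [step1 x, dot_add, dot_smul]
    have hxA : (x : Fin n → ℝ) ∈ A := Finset.mem_coe.mp x.2
    have hb : |ε * dot w ↑x| < |dot a0 ↑x + α1| := by
      have h1 := hδ2le _ hxA
      have h2 : (0:ℝ) < |dot w ↑x| + 1 := by positivity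
      have h3 : ε * (|dot w ↑x| + 1) < |dot a0 ↑x + α1| := by
        calc ε * (|dot w ↑x| + 1) < δ2 * (|dot w ↑x| + 1) := by nlinarith
          _ ≤ (|dot a0 ↑x + α1| / (|dot w ↑x| + 1)) * (|dot w ↑x| + 1) := by nlinarith
          _ = |dot a0 ↑x + α1| := by field_simp
      calc |ε * dot w ↑x| = ε * |dot w ↑x| := by rw [abs_mul, abs_of_pos hε0]
        _ < ε * (|dot w ↑x| + 1) := by nlinarith
        _ < |dot a0 ↑x + α1| := h3
    obtain ⟨hlo, hhi⟩ := abs_lt.mp hb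
    refine ⟨?_, ?_⟩
    swap
    · intro h0'
      have he : ε * dot w ↑x = -(dot a0 ↑x + α1) := by linarith
      rw [he, abs_neg] at hb
      exact lt_irrefl _ hb
    constructor
    · intro h
      cases abs_cases (dot a0 ↑x + α1) with
      | inl hc => linarith [hc.1 ▸ hlo]
      | inr hc => linarith
    · intro h
      by_contra hc
      push_neg at hc
      have hne : dot a0 ↑x + α1 ≠ 0 := by
        intro h0'
        have := habs _ hxA
        rw [h0'] at this; simp at this
      have hlt : dot a0 ↑x + α1 < 0 := lt_of_le_of_ne hc hne
      cases abs_cases (dot a0 ↑x + α1) with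
      | inl hc2 => linarith
      | inr hc2 => linarith
  · intro x hx y hy hxy
    rw [dot_add, dot_smul, dot_add, dot_smul]
    intro hcontra
    apply hεBad
    rw [hBad]
    refine Finset.mem_image.mpr ⟨(x, y), Finset.mem_filter.mpr
      ⟨Finset.mem_product.mpr ⟨hx, hy⟩, hxy⟩, ?_⟩
    have hwxy : dot w x - dot w y ≠ 0 := sub_ne_zero_of_ne (hw x hx y hy hxy)
    field_simp
    linarith

theorem stmt11 (n : ℕ) (S A B : Finset (Fin n → ℝ)) (hA : A ⊆ S) (hB : B ⊆ S)
    (hsep : ∃ v : Fin n → ℝ, v ≠ 0 ∧ ∃ tA tB : ℝ, tA ≠ tB ∧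
      (∀ x ∈ A, dot v x = tA) ∧ (∀ x ∈ B, dot v x = tB)) :
    Nat.card ↥(thrFun (↑A : Set (Fin n → ℝ))) * (B.card + 1) ≤
      Nat.card ↥(thrFun (↑S : Set (Fin n → ℝ))) := by
  classical
  obtain ⟨v, hv0, tA, tB, htAB, hvA, hvB⟩ := hsep
  obtain ⟨w, hw⟩ := exists_sep B
  choose a α hGA hGB using fun g : ↥(thrFun (↑A : Set (Fin n → ℝ))) =>
    goodWitness A B w hw g.1 g.2
  have hcount : ∀ (g : ↥(thrFun (↑A : Set (Fin n → ℝ)))) (k : Fin (B.card + 1)),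
      ∃ t : ℝ, (B.filter fun x => t ≤ dot (a g) x + α g).card = (k : ℕ) := fun g k =>
    exists_threshold_count B (fun x => dot (a g) x + α g) (hGB g) k (Nat.lt_succ_iff.mp k.2)
  choose t ht using hcount
  set c : ↥(thrFun (↑A : Set (Fin n → ℝ))) → Fin (B.card + 1) → ℝ :=
    fun g k => t g k / (tA - tB) with hc
  -- the value of the shifted functional
  have hval : ∀ g k (x : Fin n → ℝ),
      dot (a g + c g k • v) x + (α g - c g k * tA)
        = dot (a g) x + α g + c g k * (dot v x - tA) := by
    intro g k x
    rw [dot_add, dot_smul]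
    ring
  have hvalA : ∀ g k (x : Fin n → ℝ), x ∈ A →
      dot (a g + c g k • v) x + (α g - c g k * tA) = dot (a g) x + α g := by
    intro g k x hx
    rw [hval, hvA x hx]
    ring
  have hvalB : ∀ g k (x : Fin n → ℝ), x ∈ B →
      dot (a g + c g k • v) x + (α g - c g k * tA) = dot (a g) x + α g - t g k := by
    intro g k x hx
    rw [hval, hvB x hx, hc]
    have : tA - tB ≠ 0 := sub_ne_zero_of_ne htAB
    field_simp
    ring
  set F : ↥(thrFun (↑A : Set (Fin n → ℝ))) × Fin (B.card + 1) →
      ↥(thrFun (↑S : Set (Fin n → ℝ))) :=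
    fun p => ⟨fun x => decide (0 ≤ dot (a p.1 + c p.1 p.2 • v) ↑x + (α p.1 - c p.1 p.2 * tA)),
      ⟨a p.1 + c p.1 p.2 • v, α p.1 - c p.1 p.2 * tA, fun x => by simp⟩⟩ with hF
  have hinj : Function.Injective F := by
    intro p q hpq
    have hfun : ∀ x : ↥(↑S : Set (Fin n → ℝ)), (F p).1 x = (F q).1 x := by
      rw [Subtype.ext_iff] at hpq
      intro x
      rw [hpq]
    obtain ⟨g, k⟩ := p
    obtain ⟨g', k'⟩ := q
    have hg : g = g' := by
      apply Subtype.ext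
      funext x
      have hxA : (x : Fin n → ℝ) ∈ A := Finset.mem_coe.mp x.2
      have hxS : (x : Fin n → ℝ) ∈ (↑S : Set (Fin n → ℝ)) := Finset.mem_coe.mpr (hA hxA)
      have h1 := hfun ⟨↑x, hxS⟩
      simp only [hF] at h1
      rw [hvalA g k ↑x hxA, hvalA g' k' ↑x hxA] at h1
      have e1 : g.1 x = decide (0 ≤ dot (a g) ↑x + α g) := by
        rcases (hGA g x) with ⟨hiff, hne⟩
        by_cases hgx : g.1 x = true
        · rw [hgx]
          symm
          rw [decide_eq_true_iff]
          linarith [hiff.mp hgx]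
        · rw [Bool.not_eq_true] at hgx
          rw [hgx]
          symm
          rw [decide_eq_false_iff_not]
          intro hle
          have : 0 < dot (a g) ↑x + α g := lt_of_le_of_ne hle (Ne.symm hne)
          rw [hiff.mpr this] at hgx
          exact absurd hgx (by simp)
      have e2 : g'.1 x = decide (0 ≤ dot (a g') ↑x + α g') := by
        rcases (hGA g' x) with ⟨hiff, hne⟩
        by_cases hgx : g'.1 x = true
        · rw [hgx]
          symm
          rw [decide_eq_true_iff]
          linarith [hiff.mp hgx]
        · rw [Bool.not_eq_true] at hgx
          rw [hgx]
          symm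
          rw [decide_eq_false_iff_not]
          intro hle
          have : 0 < dot (a g') ↑x + α g' := lt_of_le_of_ne hle (Ne.symm hne)
          rw [hiff.mpr this] at hgx
          exact absurd hgx (by simp)
      rw [e1, e2, h1]
    subst hg
    have hk : k = k' := by
      apply Fin.ext
      rw [← ht g k, ← ht g k']
      apply Finset.card_nbij id (fun x hx => ?_) (Set.injOn_id _) (fun x hx => ?_)
      all_goals {
        simp only [Finset.coe_filter, Set.mem_setOf_eq, Set.mem_image, Finset.mem_filter, id] at hx ⊢
        obtain ⟨hxB, hxt⟩ := hx
        have hxS : (x : Fin n → ℝ) ∈ (↑S : Set (Fin n → ℝ)) := Finset.mem_coe.mpr (hB hxB)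
        have h1 := hfun ⟨x, hxS⟩
        simp only [hF] at h1
        rw [hvalB g k x hxB, hvalB g k' x hxB] at h1
        have h3 := decide_eq_decide.mp h1
        first
        | exact ⟨hxB, by linarith [h3.mp (by linarith : (0:ℝ) ≤ dot (a g) x + α g - t g k)]⟩
        | exact ⟨x, ⟨hxB, by linarith [h3.mpr (by linarith : (0:ℝ) ≤ dot (a g) x + α g - t g k')]⟩, rfl⟩
      }
    rw [hk]
  haveI : Finite ↥(thrFun (↑S : Set (Fin n → ℝ))) := by
    haveI : Finite (↥(↑S : Set (Fin n → ℝ)) → Bool) := by infer_instance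
    exact Subtype.finite
  calc Nat.card ↥(thrFun (↑A : Set (Fin n → ℝ))) * (B.card + 1)
      = Nat.card (↥(thrFun (↑A : Set (Fin n → ℝ))) × Fin (B.card + 1)) := by
        rw [Nat.card_prod, Nat.card_eq_fintype_card (α := Fin (B.card + 1)), Fintype.card_fin]
    _ ≤ Nat.card ↥(thrFun (↑S : Set (Fin n → ℝ))) := Nat.card_le_card_of_injective F hinj
end

section
/- The capacity of the Boolean cube satisfies C(H^n) ≥ n(n-1)/2 for all n ≥ 1, i.e., there are at least 2^{n(n-1)/2} distinct threshold functions on {0,1}^n. -/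
/-- The Boolean cube `{0,1}^n` viewed inside `ℝ^n`. -/
def cube (n : ℕ) : Set (Fin n → ℝ) := {x | ∀ i, x i = 0 ∨ x i = 1}

noncomputable def bval {n : ℕ} (a : Fin n → ℝ) (b : Fin n → Bool) : ℝ :=
  ∑ i, if b i then a i else 0

noncomputable def Ffun {n : ℕ} (a : Fin n → ℝ) (α : ℝ) (b : Fin n → Bool) : Bool :=
  decide (α ≤ bval a b)

lemma bval_snoc {n : ℕ} (a : Fin n → ℝ) (c : ℝ) (b : Fin n → Bool) (o : Bool) :
    bval (Fin.snoc a c) (Fin.snoc b o) = bval a b + if o then c else 0 := by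
  unfold bval
  rw [Fin.sum_univ_castSucc]
  simp [Fin.snoc_castSucc, Fin.snoc_last]

lemma step {n : ℕ} (a : Fin n → ℝ) (α : ℝ) (ha : Function.Injective (bval a)) :
    ∀ b : Fin n → Bool, ∃ c : ℝ,
      Function.Injective (bval (Fin.snoc a c)) ∧
      ∀ b'' : Fin n → Bool, (α ≤ bval a b'' + c ↔ bval a b ≤ bval a b'') := by
  intro b
  set D : Finset ℝ :=
    Finset.image (fun p : (Fin n → Bool) × (Fin n → Bool) =>
      α - (bval a p.2 - bval a p.1)) Finset.univ with hD
  set S : Finset ℝ := (Finset.univ.image (bval a)).filter (· < bval a b) with hS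
  set L : ℝ := if h : S.Nonempty then S.max' h else bval a b - 1 with hLdef
  have hL : L < bval a b := by
    rw [hLdef]
    split_ifs with h
    · exact (Finset.mem_filter.mp (S.max'_mem h)).2
    · linarith
  have hinf : (Set.Ioo L (bval a b) \ (D : Set ℝ)).Infinite :=
    (Set.Ioo_infinite hL).diff D.finite_toSet
  obtain ⟨τ, hτmem, hτD⟩ := hinf.nonempty
  obtain ⟨hτ1, hτ2⟩ := hτmem
  refine ⟨α - τ, ?_, ?_⟩
  · -- genericity
    intro b1 b2 hb
    rw [← Fin.snoc_init_self b1, ← Fin.snoc_init_self b2] at hb ⊢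
    rw [bval_snoc, bval_snoc] at hb
    have hne : α - τ ≠ 0 ∧ ∀ u v : Fin n → Bool, bval a u + (α - τ) ≠ bval a v := by
      constructor
      · intro h0
        apply hτD
        rw [hD]
        simp only [Finset.coe_image, Set.mem_image]
        exact ⟨(b, b), by simp, by linarith⟩
      · intro u v h
        apply hτD
        rw [hD]
        simp only [Finset.coe_image, Set.mem_image]
        exact ⟨(u, v), by simp, by linarith⟩
    rcases Bool.eq_false_or_eq_true (b1 (Fin.last n)) with h1 | h1 <;>
      rcases Bool.eq_false_or_eq_true (b2 (Fin.last n)) with h2 | h2 <;>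
      rw [h1, h2] at hb <;> simp at hb
    · rw [ha hb, h1, h2]
    · exfalso; exact hne.2 (Fin.init b1) (Fin.init b2) (by linarith)
    · exfalso; exact hne.2 (Fin.init b2) (Fin.init b1) (by linarith)
    · rw [ha (by linarith : bval a (Fin.init b1) = bval a (Fin.init b2)), h1, h2]
  · intro b''
    constructor
    · intro h
      by_contra hlt
      push_neg at hlt
      have hmem : bval a b'' ∈ S := by
        rw [hS, Finset.mem_filter]
        exact ⟨Finset.mem_image_of_mem _ (Finset.mem_univ _), hlt⟩
      have : bval a b'' ≤ L := by
        rw [hLdef, dif_pos ⟨_, hmem⟩]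
        exact S.le_max' _ hmem
      linarith
    · intro h; linarith

lemma main (n : ℕ) : ∃ (ι : Type) (_ : Fintype ι) (f : ι → (Fin n → ℝ) × ℝ),
    Nat.card ι = 2 ^ (n * (n - 1) / 2) ∧
    (∀ i, Function.Injective (bval (f i).1)) ∧
    Function.Injective (fun i => Ffun (f i).1 (f i).2) := by
  induction n with
  | zero =>
    refine ⟨PUnit, inferInstance, fun _ => (0, 0), by simp, ?_, ?_⟩
    · intro i x y _; exact Subsingleton.elim x y
    · intro x y _; exact Subsingleton.elim x y
  | succ n ih =>
    obtain ⟨ι, _, f, hcard, hgen, hinj⟩ := ih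
    choose c hc1 hc2 using fun (i : ι) => step (f i).1 (f i).2 (hgen i)
    refine ⟨ι × (Fin n → Bool), inferInstance,
      fun p => (Fin.snoc (f p.1).1 (c p.1 p.2), (f p.1).2), ?_, ?_, ?_⟩
    · rw [Nat.card_prod, hcard, Nat.card_eq_fintype_card, Fintype.card_fun]
      have hb2 : Fintype.card Bool ^ Fintype.card (Fin n) = 2 ^ n := by simp
      rw [hb2, ← pow_add]
      congr 1
      exact (Nat.triangle_succ n).symm
    · intro p; exact hc1 p.1 p.2
    · intro p q h
      simp only at h
      have h0 : ∀ b'' : Fin n → Bool,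
          Ffun (f p.1).1 (f p.1).2 b'' = Ffun (f q.1).1 (f q.1).2 b'' := by
        intro b''
        have := congrFun h (Fin.snoc b'' false)
        simpa [Ffun, bval_snoc] using this
      have hpq : p.1 = q.1 := hinj (funext h0)
      have hslice : ∀ b'' : Fin n → Bool,
          (((f p.1).2 : ℝ) ≤ bval (f p.1).1 b'' + c p.1 p.2 ↔
            (f p.1).2 ≤ bval (f p.1).1 b'' + c p.1 q.2) := by
        intro b''
        have := congrFun h (Fin.snoc b'' true)
        simp only [Ffun, bval_snoc, if_true, decide_eq_decide] at this
        rw [← hpq] at this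
        simpa using this
      have h1 : bval (f p.1).1 p.2 ≤ bval (f p.1).1 q.2 := by
        have := (hslice q.2)
        rw [hc2 p.1 p.2 q.2, hc2 p.1 q.2 q.2] at this
        exact this.mpr le_rfl
      have h2 : bval (f p.1).1 q.2 ≤ bval (f p.1).1 p.2 := by
        have := (hslice p.2)
        rw [hc2 p.1 p.2 p.2, hc2 p.1 q.2 p.2] at this
        exact this.mp le_rfl
      have : p.2 = q.2 := hgen p.1 (le_antisymm h1 h2)
      exact Prod.ext hpq this

lemma bval_eq_dot {n : ℕ} (a : Fin n → ℝ) (x : Fin n → ℝ) (hx : x ∈ cube n) :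
    bval a (fun j => decide (x j = 1)) = dot a x := by
  unfold bval dot
  refine Finset.sum_congr rfl fun j _ => ?_
  show (if decide (x j = 1) = true then a j else 0) = a j * x j
  rcases hx j with h | h
  · have hne : ¬ (x j = 1) := by rw [h]; norm_num
    rw [decide_eq_false hne, h]; simp
  · rw [decide_eq_true_eq.mpr h, h]; simp

theorem stmt13 (n : ℕ) (hn : 1 ≤ n) :
    2 ^ (n * (n - 1) / 2) ≤ Nat.card ↥(thrFun (cube n)) := by
  obtain ⟨ι, _, f, hcard, hgen, hinj⟩ := main n
  haveI hfin : Finite ↥(cube n) := by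
    apply Finite.of_injective (fun x : ↥(cube n) => fun j => decide ((x : Fin n → ℝ) j = 1))
    intro x y h
    ext j
    have hj := congrFun h j
    rw [decide_eq_decide] at hj
    rcases x.2 j with hx | hx <;> rcases y.2 j with hy | hy <;> rw [hx, hy] <;>
      first
        | rfl
        | (exfalso; rw [hx, hy] at hj; norm_num at hj)
  let e : ι → ↥(thrFun (cube n)) := fun i =>
    ⟨fun x => Ffun (f i).1 (f i).2 (fun j => decide ((x : Fin n → ℝ) j = 1)),
      ⟨(f i).1, -(f i).2, fun x => by
        simp only [Ffun, decide_eq_true_eq]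
        rw [bval_eq_dot _ _ x.2]
        constructor <;> intro h <;> linarith⟩⟩
  have einj : Function.Injective e := by
    intro i i' h
    apply hinj
    funext b
    have hx : (fun j => if b j then (1:ℝ) else 0) ∈ cube n := by
      intro j; by_cases hb : b j <;> simp [hb]
    have := congrFun (Subtype.ext_iff.mp h) ⟨_, hx⟩
    simpa [e, show (fun j => decide ((if b j then (1:ℝ) else 0) = 1)) = b by
      funext j; by_cases hb : b j <;> simp [hb]] using this
  calc 2 ^ (n * (n - 1) / 2) = Nat.card ι := hcard.symm
    _ ≤ Nat.card ↥(thrFun (cube n)) := Nat.card_le_card_of_injective e einj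
end

section
/- For every subset S ⊆ {0,1}^n with S non-empty, the capacity satisfies C(S) > (1/16)·(log₂|S|)². -/
open Finset Real

variable {n : ℕ}

lemma avoid_s14 (Q : Finset ℝ) {lo hi : ℝ} (h : lo < hi) :
    ∃ t, lo < t ∧ t < hi ∧ t ∉ Q := by
  have h1 : (Set.Ioo lo hi \ ↑Q).Nonempty :=
    ((Set.Ioo_infinite h).diff Q.finite_toSet).nonempty
  obtain ⟨t, ht, htQ⟩ := h1
  exact ⟨t, ht.1, ht.2, by simpa using htQ⟩

variable {V : Type*} [DecidableEq V]

lemma topj (F : Finset V) (w : V → ℝ) (hw : ∀ x ∈ F, ∀ y ∈ F, w x = w y → x = y) :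
    ∀ j, j ≤ F.card → ∃ B, B ⊆ F ∧ B.card = j ∧ ∀ x ∈ B, ∀ y ∈ F \ B, w y < w x := by
  intro j
  induction j with
  | zero => exact fun _ => ⟨∅, Finset.empty_subset F, Finset.card_empty, by simp⟩
  | succ j ih =>
    intro hj
    obtain ⟨B, hBF, hBcard, hBsep⟩ := ih (Nat.le_of_succ_le hj)
    have hne : (F \ B).Nonempty := by
      rw [← Finset.card_pos, Finset.card_sdiff_of_subset hBF, hBcard]
      omega
    obtain ⟨ystar, hystar, hmax⟩ := Finset.exists_max_image (F \ B) w hne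
    refine ⟨insert ystar B, ?_, ?_, ?_⟩
    · exact Finset.insert_subset (Finset.mem_sdiff.1 hystar).1 hBF
    · rw [Finset.card_insert_of_notMem (Finset.mem_sdiff.1 hystar).2, hBcard]
    · intro x hx y hy
      have hyF : y ∈ F \ B := by
        rw [Finset.mem_sdiff] at hy ⊢
        exact ⟨hy.1, fun h => hy.2 (Finset.mem_insert_of_mem h)⟩
      rcases Finset.mem_insert.1 hx with rfl | hxB
      · rcases lt_or_eq_of_le (hmax y hyF) with h | h
        · exact h
        · exact absurd (hw _ (Finset.mem_sdiff.1 hyF).1 _ (Finset.mem_sdiff.1 hystar).1 h)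
            (fun he => (Finset.mem_sdiff.1 hy).2 (he ▸ Finset.mem_insert_self _ _))
      · exact hBsep x hxB y hyF

lemma sep (F B : Finset V) (w : V → ℝ) (hB : B ⊆ F)
    (hsep : ∀ x ∈ B, ∀ y ∈ F \ B, w y < w x) (Q : Finset ℝ) :
    ∃ t, t ∉ Q ∧ (∀ x ∈ B, 0 < w x + t) ∧ (∀ y ∈ F \ B, w y + t < 0) := by
  classical
  rcases Finset.eq_empty_or_nonempty B with rfl | hBne
  · rcases Finset.eq_empty_or_nonempty (F \ ∅) with he | hCne
    · obtain ⟨t, _, _, htQ⟩ := avoid_s14 Q (zero_lt_one)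
      exact ⟨t, htQ, by simp, fun y hy => by rw [he] at hy; simp at hy⟩
    · set hi := (F \ ∅).inf' hCne (fun y => -(w y)) with hhi
      obtain ⟨t, ht1, ht2, htQ⟩ := avoid_s14 Q (sub_one_lt hi)
      refine ⟨t, htQ, by simp, fun y hy => ?_⟩
      have : hi ≤ -(w y) := by rw [hhi]; exact Finset.inf'_le (fun y => -(w y)) hy
      linarith
  · set lo := B.sup' hBne (fun x => -(w x)) with hlo
    have hxlo : ∀ x ∈ B, -(w x) ≤ lo := fun x hx => by rw [hlo]; exact Finset.le_sup' (fun x => -(w x)) hx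
    rcases Finset.eq_empty_or_nonempty (F \ B) with he | hCne
    · obtain ⟨t, ht1, ht2, htQ⟩ := avoid_s14 Q (lt_add_one lo)
      refine ⟨t, htQ, fun x hx => by have := hxlo x hx; linarith,
        fun y hy => by rw [he] at hy; simp at hy⟩
    · set hi := (F \ B).inf' hCne (fun y => -(w y)) with hhi
      have hlohi : lo < hi := by
        obtain ⟨xs, hxs, hxeq⟩ := Finset.exists_mem_eq_sup' hBne (fun x => -(w x))
        obtain ⟨ys, hys, hyeq⟩ := Finset.exists_mem_eq_inf' hCne (fun y => -(w y))
        rw [← hlo] at hxeq; rw [← hhi] at hyeq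
        rw [hxeq, hyeq]
        have := hsep xs hxs ys hys
        linarith
      obtain ⟨t, ht1, ht2, htQ⟩ := avoid_s14 Q hlohi
      refine ⟨t, htQ, fun x hx => by have := hxlo x hx; linarith, fun y hy => ?_⟩
      have : hi ≤ -(w y) := by rw [hhi]; exact Finset.inf'_le (fun y => -(w y)) hy
      linarith

lemma bin_inj (i : Fin n) (F : Finset (Fin n → ℝ)) (hF : ↑F ⊆ cube n)
    (hconst : ∀ x ∈ F, ∀ y ∈ F, x i = y i) :
    ∃ b : Fin n → ℝ, ∀ x ∈ F, ∀ y ∈ F, dot b x = dot b y → x = y := by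
  classical
  refine ⟨fun j => if j = i then 0 else (2:ℝ)^(j:ℕ), ?_⟩
  set U : (Fin n → ℝ) → Finset ℕ :=
    fun x => (Finset.univ.filter (fun j : Fin n => j ≠ i ∧ x j = 1)).image Fin.val with hUdef
  have key : ∀ x ∈ F, dot (fun j => if j = i then 0 else (2:ℝ)^(j:ℕ)) x
      = ((∑ k ∈ U x, 2^k : ℕ) : ℝ) := by
    intro x hx
    push_cast
    rw [hUdef]
    rw [Finset.sum_image (fun a _ b _ h => Fin.val_injective h)]
    rw [dot, Finset.sum_filter]
    apply Finset.sum_congr rfl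
    intro j _
    by_cases hji : j = i
    · simp [hji]
    · rcases hF hx j with h0 | h0 <;> simp [hji, h0]
  intro x hx y hy hxy
  have h1 : (∑ k ∈ U x, 2^k : ℕ) = (∑ k ∈ U y, 2^k : ℕ) := by
    have := (key x hx).symm.trans (hxy.trans (key y hy))
    exact_mod_cast this
  have hU : U x = U y := by
    rw [← Finset.toFinset_bitIndices_twoPowSum (U x), h1,
      Finset.toFinset_bitIndices_twoPowSum]
  funext j
  by_cases hj : j = i
  · rw [hj]; exact hconst x hx y hy
  · have hmem : ∀ z : Fin n → ℝ, (j : ℕ) ∈ U z ↔ z j = 1 := by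
      intro z
      rw [hUdef]
      simp only [Finset.mem_image, Finset.mem_filter, Finset.mem_univ, true_and]
      constructor
      · rintro ⟨j', ⟨hj', hz⟩, hval⟩
        rwa [Fin.val_injective hval] at hz
      · intro hz; exact ⟨j, ⟨hj, hz⟩, rfl⟩
    rcases hF hx j with hx0 | hx1 <;> rcases hF hy j with hy0 | hy1
    · rw [hx0, hy0]
    · exfalso
      have : (j:ℕ) ∈ U x := by rw [hU]; exact (hmem y).2 hy1
      rw [hmem x] at this; rw [this] at hx0; norm_num at hx0
    · exfalso
      have : (j:ℕ) ∈ U y := by rw [← hU]; exact (hmem x).2 hx1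
      rw [hmem y] at this; rw [this] at hy0; norm_num at hy0
    · rw [hx1, hy1]

def good (S A : Finset (Fin n → ℝ)) : Prop :=
  ∃ a : Fin n → ℝ, ∃ α : ℝ,
    (∀ x ∈ A, 0 < dot a x + α) ∧ (∀ x ∈ S \ A, dot a x + α < 0) ∧
    (∀ x ∈ S, ∀ y ∈ S, dot a x + α = dot a y + α → x = y)

open Classical in
noncomputable def GS (S : Finset (Fin n → ℝ)) : Finset (Finset (Fin n → ℝ)) :=
  S.powerset.filter (fun A => good S A)

lemma mem_GS {S A : Finset (Fin n → ℝ)} : A ∈ GS S ↔ A ⊆ S ∧ good S A := by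
  simp [GS, Finset.mem_filter, Finset.mem_powerset]


lemma dot_expand (a b : Fin n → ℝ) (ε t : ℝ) (i : Fin n) (x : Fin n → ℝ) :
    dot (fun k => a k + ε * b k + (if k = i then t else 0)) x
      = dot a x + ε * dot b x + t * x i := by
  simp only [dot, add_mul, Finset.sum_add_distrib, Finset.mul_sum, ite_mul, zero_mul]
  rw [Finset.sum_ite_eq' Finset.univ i (fun k => t * x k)]
  simp [mul_assoc]

lemma step_s14 (i : Fin n) (c : ℝ) (hc : c = 0 ∨ c = 1) (S₀ S₁ : Finset (Fin n → ℝ))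
    (hcube : ↑(S₀ ∪ S₁) ⊆ cube n) (h0 : ∀ x ∈ S₀, x i = c) (h1 : ∀ x ∈ S₁, x i ≠ c)
    (h0ne : S₀.Nonempty) (A₀ : Finset (Fin n → ℝ)) (hA₀ : A₀ ⊆ S₀) (hgood : good S₀ A₀)
    (j : ℕ) (hj : j ≤ S₁.card) :
    ∃ B, B ⊆ S₁ ∧ B.card = j ∧ good (S₀ ∪ S₁) (A₀ ∪ B) := by
  classical
  obtain ⟨a, α, hpos, hneg, hinj⟩ := hgood
  -- points of S₁ have i-th coordinate 1 - c
  have h1c : ∀ x ∈ S₁, x i = 1 - c := by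
    intro x hx
    have hxc : x ∈ cube n := hcube (Finset.mem_coe.2 (Finset.mem_union_right _ hx))
    rcases hc with rfl | rfl
    · rcases hxc i with h | h
      · exact absurd h (h1 x hx)
      · rw [h]; ring
    · rcases hxc i with h | h
      · rw [h]; ring
      · exact absurd h (h1 x hx)
  -- injective direction on S₁
  obtain ⟨b, hbinj⟩ := bin_inj i S₁
    (fun x hx => hcube (Finset.mem_coe.2 (Finset.mem_union_right _ (Finset.mem_coe.1 hx))))
    (fun x hx y hy => by rw [h1c x hx, h1c y hy])
  -- values on S₀ are nonzero
  have hune : ∀ x ∈ S₀, dot a x + α ≠ 0 := by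
    intro x hx
    by_cases hA : x ∈ A₀
    · exact ne_of_gt (hpos x hA)
    · exact ne_of_lt (hneg x (Finset.mem_sdiff.2 ⟨hx, hA⟩))
  -- choose ε
  have hε₀pos : 0 < S₀.inf' h0ne (fun x => |dot a x + α| / (|dot b x| + 1)) := by
    rw [Finset.lt_inf'_iff]
    intro x hx
    have h1 : 0 < |dot a x + α| := abs_pos.2 (hune x hx)
    positivity
  obtain ⟨ε, hε0, hεlt, hεQ⟩ := avoid_s14
    (((S₀ ∪ S₁) ×ˢ (S₀ ∪ S₁)).image
      (fun z => ((dot a z.2 + α) - (dot a z.1 + α)) / (dot b z.1 - dot b z.2))) hε₀pos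
  have hεsmall : ∀ x ∈ S₀, ε * |dot b x| < |dot a x + α| := by
    intro x hx
    have h1 : ε < |dot a x + α| / (|dot b x| + 1) :=
      lt_of_lt_of_le hεlt (Finset.inf'_le _ hx)
    have h2 : (0:ℝ) < |dot b x| + 1 := by positivity
    have h3 : ε * (|dot b x| + 1) < |dot a x + α| := (lt_div_iff₀ h2).1 h1
    nlinarith [abs_nonneg (dot b x)]
  set q : (Fin n → ℝ) → ℝ := fun x => dot a x + α + ε * dot b x with hqdef
  have hq0pos : ∀ x ∈ A₀, 0 < q x := by
    intro x hx
    have h1 := hεsmall x (hA₀ hx)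
    have h2 := hpos x hx
    have h3 : ε * dot b x ≥ -(ε * |dot b x|) := by
      have := neg_abs_le (dot b x)
      nlinarith [le_abs_self (dot b x)]
    rw [abs_of_pos h2] at h1
    simp only [hqdef]
    linarith
  have hq0neg : ∀ x ∈ S₀ \ A₀, q x < 0 := by
    intro x hx
    have h1 := hεsmall x (Finset.mem_sdiff.1 hx).1
    have h2 := hneg x hx
    have h3 : ε * dot b x ≤ ε * |dot b x| := by
      nlinarith [le_abs_self (dot b x)]
    rw [abs_of_neg h2] at h1
    simp only [hqdef]
    linarith
  have hq0inj : ∀ x ∈ S₀, ∀ y ∈ S₀, q x = q y → x = y := by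
    intro x hx y hy h
    by_cases hb : dot b x = dot b y
    · apply hinj x hx y hy
      simp only [hqdef, hb] at h
      linarith
    · exfalso
      apply hεQ
      apply Finset.mem_image.2
      refine ⟨(x, y), Finset.mem_product.2
        ⟨Finset.mem_union_left _ hx, Finset.mem_union_left _ hy⟩, ?_⟩
      simp only [hqdef] at h
      field_simp [sub_ne_zero.2 hb]
      linarith
  have hq1inj : ∀ x ∈ S₁, ∀ y ∈ S₁, q x = q y → x = y := by
    intro x hx y hy h
    by_cases hb : dot b x = dot b y
    · exact hbinj x hx y hy hb
    · exfalso
      apply hεQ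
      apply Finset.mem_image.2
      refine ⟨(x, y), Finset.mem_product.2
        ⟨Finset.mem_union_right _ hx, Finset.mem_union_right _ hy⟩, ?_⟩
      simp only [hqdef] at h
      field_simp [sub_ne_zero.2 hb]
      linarith
  obtain ⟨B, hBsub, hBcard, hBsep⟩ := topj S₁ q hq1inj j hj
  obtain ⟨t, htQ, htpos, htneg⟩ := sep S₁ B q hBsub hBsep
    (((S₀ ∪ S₁) ×ˢ (S₀ ∪ S₁)).image (fun z => q z.1 - q z.2))
  -- the slope on the S₁ side
  have he : (1 - 2*c) ≠ 0 := by rcases hc with rfl | rfl <;> norm_num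
  refine ⟨B, hBsub, hBcard, ?_⟩
  have hval0 : ∀ x ∈ S₀,
      dot (fun k => a k + ε * b k + (if k = i then t / (1 - 2*c) else 0)) x
        + (α - (t / (1 - 2*c)) * c) = q x := by
    intro x hx
    rw [dot_expand, h0 x hx]
    simp only [hqdef]; ring
  have hval1 : ∀ x ∈ S₁,
      dot (fun k => a k + ε * b k + (if k = i then t / (1 - 2*c) else 0)) x
        + (α - (t / (1 - 2*c)) * c) = q x + t := by
    intro x hx
    rw [dot_expand, h1c x hx]
    have h5 : t / (1 - 2*c) * (1 - c) - t / (1 - 2*c) * c = t := by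
      field_simp
      ring
    simp only [hqdef]
    nlinarith [h5]
  refine ⟨fun k => a k + ε * b k + (if k = i then t / (1 - 2*c) else 0),
    α - (t / (1 - 2*c)) * c, ?_, ?_, ?_⟩
  · intro x hx
    rcases Finset.mem_union.1 hx with hx0 | hx1
    · rw [hval0 x (hA₀ hx0)]; exact hq0pos x hx0
    · rw [hval1 x (hBsub hx1)]; exact htpos x hx1
  · intro x hx
    obtain ⟨hxS, hxA⟩ := Finset.mem_sdiff.1 hx
    rcases Finset.mem_union.1 hxS with hx0 | hx1
    · rw [hval0 x hx0]
      exact hq0neg x (Finset.mem_sdiff.2 ⟨hx0, fun h => hxA (Finset.mem_union_left _ h)⟩)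
    · rw [hval1 x hx1]
      exact htneg x (Finset.mem_sdiff.2 ⟨hx1, fun h => hxA (Finset.mem_union_right _ h)⟩)
  · intro x hx y hy h
    have hcross : ∀ z ∈ S₀ ∪ S₁, ∀ w ∈ S₀ ∪ S₁, t ≠ q z - q w := by
      intro z hz w hw hzw
      apply htQ
      apply Finset.mem_image.2
      exact ⟨(z, w), Finset.mem_product.2 ⟨hz, hw⟩, hzw.symm⟩
    rcases Finset.mem_union.1 hx with hx0 | hx1 <;> rcases Finset.mem_union.1 hy with hy0 | hy1
    · rw [hval0 x hx0, hval0 y hy0] at h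
      exact hq0inj x hx0 y hy0 h
    · rw [hval0 x hx0, hval1 y hy1] at h
      exact absurd (by linarith : t = q x - q y) (hcross x hx y hy)
    · rw [hval1 x hx1, hval0 y hy0] at h
      exact absurd (by linarith : t = q y - q x) (hcross y hy x hx)
    · rw [hval1 x hx1, hval1 y hy1] at h
      exact hq1inj x hx1 y hy1 (by linarith)

lemma count (i : Fin n) (c : ℝ) (hc : c = 0 ∨ c = 1) (S₀ S₁ : Finset (Fin n → ℝ))
    (hcube : ↑(S₀ ∪ S₁) ⊆ cube n) (h0 : ∀ x ∈ S₀, x i = c) (h1 : ∀ x ∈ S₁, x i ≠ c)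
    (h0ne : S₀.Nonempty) :
    (GS S₀).card * (S₁.card + 1) ≤ (GS (S₀ ∪ S₁)).card := by
  classical
  have hdisj : Disjoint S₀ S₁ := by
    rw [Finset.disjoint_left]
    intro x hx hx1
    exact h1 x hx1 (h0 x hx)
  set Φ : Finset (Fin n → ℝ) → Finset (Fin n → ℝ) × ℕ :=
    fun A => (A ∩ S₀, (A ∩ S₁).card) with hΦ
  have hsub : (GS S₀) ×ˢ (Finset.range (S₁.card + 1)) ⊆ (GS (S₀ ∪ S₁)).image Φ := by
    rintro ⟨A₀, j⟩ hz
    obtain ⟨hz1, hz2⟩ := Finset.mem_product.1 hz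
    obtain ⟨hA₀S, hgood⟩ := mem_GS.1 hz1
    have hj : j ≤ S₁.card := Nat.lt_succ_iff.1 (Finset.mem_range.1 hz2)
    obtain ⟨B, hBsub, hBcard, hgood'⟩ :=
      step_s14 i c hc S₀ S₁ hcube h0 h1 h0ne A₀ hA₀S hgood j hj
    apply Finset.mem_image.2
    refine ⟨A₀ ∪ B, mem_GS.2 ⟨Finset.union_subset_union hA₀S hBsub, hgood'⟩, ?_⟩
    have e0 : (A₀ ∪ B) ∩ S₀ = A₀ := by
      ext z
      simp only [Finset.mem_inter, Finset.mem_union]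
      constructor
      · rintro ⟨hz1 | hz1, hz2⟩
        · exact hz1
        · exact absurd hz2 (Finset.disjoint_right.1 hdisj (hBsub hz1))
      · intro hz
        exact ⟨Or.inl hz, hA₀S hz⟩
    have e1 : (A₀ ∪ B) ∩ S₁ = B := by
      ext z
      simp only [Finset.mem_inter, Finset.mem_union]
      constructor
      · rintro ⟨hz1 | hz1, hz2⟩
        · exact absurd hz2 (Finset.disjoint_right.1 hdisj.symm (hA₀S hz1))
        · exact hz1
      · intro hz
        exact ⟨Or.inr hz, hBsub hz⟩
    rw [hΦ]
    simp only [e0, e1, hBcard]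
  calc (GS S₀).card * (S₁.card + 1)
      = ((GS S₀) ×ˢ (Finset.range (S₁.card + 1))).card := by
        rw [Finset.card_product, Finset.card_range]
    _ ≤ ((GS (S₀ ∪ S₁)).image Φ).card := Finset.card_le_card hsub
    _ ≤ (GS (S₀ ∪ S₁)).card := Finset.card_image_le

lemma base (x : Fin n → ℝ) : 2 ≤ (GS ({x} : Finset (Fin n → ℝ))).card := by
  classical
  have h1 : (∅ : Finset (Fin n → ℝ)) ∈ GS {x} := by
    refine mem_GS.2 ⟨Finset.empty_subset _, 0, -1, ?_, ?_, ?_⟩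
    · intro y hy; simp at hy
    · intro y hy
      simp only [Finset.sdiff_empty, Finset.mem_singleton] at hy
      simp [dot, hy]
    · intro y hy z hz _
      simp only [Finset.mem_singleton] at hy hz
      rw [hy, hz]
  have h2 : ({x} : Finset (Fin n → ℝ)) ∈ GS {x} := by
    refine mem_GS.2 ⟨Finset.Subset.refl _, 0, 1, ?_, ?_, ?_⟩
    · intro y hy
      simp only [Finset.mem_singleton] at hy
      simp [dot, hy]
    · intro y hy; simp at hy
    · intro y hy z hz _
      simp only [Finset.mem_singleton] at hy hz
      rw [hy, hz]
  have hsub : ({∅, {x}} : Finset (Finset (Fin n → ℝ))) ⊆ GS {x} := by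
    intro A hA
    rcases Finset.mem_insert.1 hA with rfl | hA
    · exact h1
    · rw [Finset.mem_singleton.1 hA]; exact h2
  have : ({∅, {x}} : Finset (Finset (Fin n → ℝ))).card = 2 :=
    Finset.card_pair (Finset.singleton_ne_empty x).symm
  rw [← this]
  exact Finset.card_le_card hsub

set_option maxHeartbeats 800000 in
lemma numeric (M Sr : ℝ) (hM1 : 1 ≤ M) (hS1 : 1 ≤ Sr) (hsm : Sr ≤ M) :
    (1/16 : ℝ) * (logb 2 (M + Sr))^2 ≤ (1/16) * (logb 2 M)^2 + logb 2 (Sr+1) := by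
  have h2 : (1:ℝ) < 2 := one_lt_two
  have hMpos : (0:ℝ) < M := by linarith
  have hMS : (0:ℝ) < M + Sr := by linarith
  set L := logb 2 (M + Sr) with hL
  set l := logb 2 M with hl
  set u := logb 2 (Sr + 1) with hu
  have hl0 : 0 ≤ l := logb_nonneg h2 hM1
  have hLl : l ≤ L := logb_le_logb_of_le h2 hMpos (by linarith)
  have hL1 : L ≤ l + 1 := by
    have e1 : logb 2 (2 * M) = 1 + l := by
      rw [logb_mul (by norm_num) (ne_of_gt hMpos), logb_self_eq_one h2]
    have := logb_le_logb_of_le h2 hMS (by linarith : M + Sr ≤ 2 * M)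
    rw [e1] at this
    linarith
  have hu1 : 1 ≤ u := by
    have : logb 2 2 ≤ u := logb_le_logb_of_le h2 (by norm_num) (by linarith)
    rwa [logb_self_eq_one h2] at this
  rcases le_total (M + Sr) ((Sr+1)^4) with hcase | hcase
  · -- case A : s is large
    have hL4u : L ≤ 4 * u := by
      have := logb_le_logb_of_le h2 hMS hcase
      rwa [logb_pow, Nat.cast_ofNat] at this
    nlinarith [mul_nonneg hl0 (sub_nonneg.2 hLl)]
  · -- case B : s is small
    set r := (M + Sr) ^ ((1:ℝ)/4) with hr
    have hr1 : 1 ≤ r := one_le_rpow (by linarith) (by norm_num)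
    have hr4 : r ^ (4:ℕ) = M + Sr := by
      rw [hr, ← rpow_natCast ((M + Sr) ^ ((1:ℝ)/4)) 4, ← rpow_mul (le_of_lt hMS)]
      norm_num
    have hSrr : Sr ≤ r := by
      apply le_of_pow_le_pow_left₀ (by norm_num : (4:ℕ) ≠ 0) (by linarith)
      rw [hr4]
      exact le_trans (pow_le_pow_left₀ (by linarith) (by linarith : Sr ≤ Sr + 1) 4) hcase
    have hk : (0.6931471803 : ℝ) < Real.log 2 := log_two_gt_d9
    have hkpos : (0:ℝ) < Real.log 2 := by linarith
    -- (L - l) * log 2 * (M + Sr) ≤ 2 * Sr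
    have hA : (L - l) * Real.log 2 * (M + Sr) ≤ 2 * Sr := by
      have e1 : (L - l) * Real.log 2 = Real.log (M + Sr) - Real.log M := by
        rw [hL, hl, logb, logb]
        field_simp
      have e2 : Real.log (M + Sr) - Real.log M = Real.log ((M + Sr)/M) := by
        rw [Real.log_div (ne_of_gt hMS) (ne_of_gt hMpos)]
      have e3 : Real.log ((M + Sr)/M) ≤ Sr / M := by
        have := Real.log_le_sub_one_of_pos (div_pos hMS hMpos)
        have e4 : (M + Sr)/M - 1 = Sr / M := by field_simp; ring
        linarith [e4 ▸ this]
      rw [e1, e2]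
      have e5 : Real.log ((M+Sr)/M) * (M + Sr) ≤ (Sr / M) * (M + Sr) := by
        apply mul_le_mul_of_nonneg_right e3 (le_of_lt hMS)
      have e6 : (Sr / M) * (M + Sr) ≤ 2 * Sr := by
        rw [div_mul_eq_mul_div, div_le_iff₀ hMpos]
        nlinarith
      linarith
    -- L * log 2 ≤ (4/3) * r^3
    have hB : L * Real.log 2 ≤ (4/3) * r^3 := by
      have e1 : L * Real.log 2 = Real.log (M + Sr) := by
        rw [hL, logb]; field_simp
      have e2 : Real.log (M + Sr) = 4 * Real.log r := by
        rw [← hr4, Real.log_pow]; norm_num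
      have e3 : 3 * Real.log r = Real.log (r^3) := by
        rw [Real.log_pow]; norm_num
      have e4 : Real.log (r^3) ≤ r^3 := by
        have := Real.log_le_sub_one_of_pos (by positivity : (0:ℝ) < r^3)
        linarith
      rw [e1, e2]
      linarith
    -- combine
    have hr3pos : (0:ℝ) < r^3 := by positivity
    have hLpos : 0 ≤ L := le_trans hl0 hLl
    have hD : 0 ≤ L - l := by linarith
    -- L * (L - l) * (log 2)^2 * (M+Sr) ≤ (8/3) * r^3 * Sr
    have hprod : L * ((L - l) * Real.log 2 * (M + Sr)) * Real.log 2 ≤ (4/3) * r^3 * (2 * Sr) := by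
      have h1 : L * ((L - l) * Real.log 2 * (M + Sr)) ≤ L * (2 * Sr) := by
        apply mul_le_mul_of_nonneg_left hA hLpos
      have h2 : L * (2 * Sr) * Real.log 2 = (L * Real.log 2) * (2 * Sr) := by ring
      have h3 : (L * Real.log 2) * (2 * Sr) ≤ ((4/3) * r^3) * (2 * Sr) := by
        apply mul_le_mul_of_nonneg_right hB (by linarith)
      calc L * ((L - l) * Real.log 2 * (M + Sr)) * Real.log 2
          ≤ L * (2 * Sr) * Real.log 2 := by
            apply mul_le_mul_of_nonneg_right h1 (le_of_lt hkpos)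
        _ = (L * Real.log 2) * (2 * Sr) := h2
        _ ≤ ((4/3) * r^3) * (2 * Sr) := h3
    -- so L * (L - l) ≤ 8  (since (log 2)^2 > 1/3 and r^3 * Sr ≤ M + Sr)
    have hrS : r^3 * Sr ≤ M + Sr := by
      have : r^3 * Sr ≤ r^3 * r := mul_le_mul_of_nonneg_left hSrr (le_of_lt hr3pos)
      have e : r^3 * r = r^(4:ℕ) := by ring
      rw [e, hr4] at this
      exact this
    have hPk : L * (L - l) * (Real.log 2)^2 ≤ 8/3 := by
      have h9 : L * (L - l) * (Real.log 2)^2 * (M + Sr) ≤ (8/3) * (M + Sr) := by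
        calc L * (L - l) * (Real.log 2)^2 * (M + Sr)
            = L * ((L - l) * Real.log 2 * (M + Sr)) * Real.log 2 := by ring
          _ ≤ (4/3) * r^3 * (2 * Sr) := hprod
          _ = (8/3) * (r^3 * Sr) := by ring
          _ ≤ (8/3) * (M + Sr) := by linarith
      exact le_of_mul_le_mul_right h9 hMS
    have hk2 : (0.48 : ℝ) < (Real.log 2)^2 := by nlinarith
    have hLD : L * (L - l) ≤ 8 := by
      nlinarith [hPk, hk2, mul_nonneg hLpos hD]
    have hfin : L^2 - l^2 ≤ 16 := by nlinarith [hLD, sq_nonneg (L - l)]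
    linarith

lemma branch (i : Fin n) (c : ℝ) (hc : c = 0 ∨ c = 1) (S S₀ S₁ : Finset (Fin n → ℝ))
    (hU : S₀ ∪ S₁ = S) (hcube : ↑S ⊆ cube n)
    (h0 : ∀ x ∈ S₀, x i = c) (h1 : ∀ x ∈ S₁, x i ≠ c)
    (h1le : S₁.card ≤ S₀.card) (h0ne : S₀.Nonempty) (h1ne : S₁.Nonempty)
    (IH : (1/16 : ℝ) * (logb 2 S₀.card)^2 < logb 2 (GS S₀).card) :
    (1/16 : ℝ) * (logb 2 S.card)^2 < logb 2 (GS S).card := by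
  have hdisj : Disjoint S₀ S₁ := by
    rw [Finset.disjoint_left]
    intro x hx hx1
    exact h1 x hx1 (h0 x hx)
  have hcount := count i c hc S₀ S₁ (by rw [hU]; exact hcube) h0 h1 h0ne
  rw [hU] at hcount
  have hN₀ : 1 ≤ (GS S₀).card := by
    by_contra h
    have h0' : (GS S₀).card = 0 := by omega
    rw [h0'] at IH
    have : (0:ℝ) ≤ (1/16 : ℝ) * (logb 2 S₀.card)^2 := by positivity
    simp only [Nat.cast_zero, Real.logb_zero] at IH
    linarith
  have hcard : S.card = S₀.card + S₁.card := by
    rw [← hU]; exact Finset.card_union_of_disjoint hdisj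
  have hs1 : 1 ≤ S₁.card := Finset.card_pos.2 h1ne
  have hM1 : 1 ≤ S₀.card := Finset.card_pos.2 h0ne
  have hnum := numeric (S₀.card : ℝ) (S₁.card : ℝ) (by exact_mod_cast hM1)
    (by exact_mod_cast hs1) (by exact_mod_cast h1le)
  have hle : ((GS S₀).card * (S₁.card + 1) : ℝ) ≤ ((GS S).card : ℝ) := by
    exact_mod_cast hcount
  have hpos : (0:ℝ) < ((GS S₀).card : ℝ) * ((S₁.card : ℝ) + 1) := by
    have : (0:ℝ) < ((GS S₀).card : ℝ) := by exact_mod_cast hN₀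
    positivity
  have hlogle : logb 2 (((GS S₀).card : ℝ) * ((S₁.card : ℝ) + 1)) ≤ logb 2 ((GS S).card : ℝ) := by
    apply Real.logb_le_logb_of_le one_lt_two hpos
    push_cast
    push_cast at hle
    linarith
  have hsplitlog : logb 2 (((GS S₀).card : ℝ) * ((S₁.card : ℝ) + 1))
      = logb 2 ((GS S₀).card : ℝ) + logb 2 ((S₁.card : ℝ) + 1) := by
    apply Real.logb_mul
    · have : (0:ℝ) < ((GS S₀).card : ℝ) := by exact_mod_cast hN₀
      linarith
    · have : (0:ℝ) ≤ (S₁.card : ℝ) := Nat.cast_nonneg _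
      linarith
  have hc2 : ((S.card : ℕ) : ℝ) = (S₀.card : ℝ) + (S₁.card : ℝ) := by
    rw [hcard]; push_cast; ring
  rw [hc2]
  linarith

lemma main_s14 : ∀ (N : ℕ) (S : Finset (Fin n → ℝ)), S.card ≤ N → ↑S ⊆ cube n → S.Nonempty →
    (1/16 : ℝ) * (logb 2 S.card)^2 < logb 2 ((GS S).card) := by
  intro N
  induction N with
  | zero =>
    intro S hcard _ hne
    exact absurd (Finset.card_pos.2 hne) (by omega)
  | succ N ih =>
    intro S hcard hcube hne
    classical
    by_cases hsplit : ∃ i : Fin n, (S.filter (fun z => z i = (0:ℝ))).Nonempty ∧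
        (S.filter (fun z => z i = (1:ℝ))).Nonempty
    · obtain ⟨i, hne0, hne1⟩ := hsplit
      set F0 := S.filter (fun z => z i = (0:ℝ)) with hF0
      set F1 := S.filter (fun z => z i = (1:ℝ)) with hF1
      have hU : F0 ∪ F1 = S := by
        ext z
        simp only [hF0, hF1, Finset.mem_union, Finset.mem_filter]
        constructor
        · rintro (⟨hz, _⟩ | ⟨hz, _⟩) <;> exact hz
        · intro hz
          rcases hcube hz i with h | h
          · exact Or.inl ⟨hz, h⟩
          · exact Or.inr ⟨hz, h⟩
      have h00 : ∀ x ∈ F0, x i = (0:ℝ) := fun x hx => (Finset.mem_filter.1 hx).2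
      have h11 : ∀ x ∈ F1, x i = (1:ℝ) := fun x hx => (Finset.mem_filter.1 hx).2
      have hF0sub : ↑F0 ⊆ cube n := fun x hx =>
        hcube (Finset.mem_coe.2 (Finset.filter_subset _ _ (Finset.mem_coe.1 hx)))
      have hF1sub : ↑F1 ⊆ cube n := fun x hx =>
        hcube (Finset.mem_coe.2 (Finset.filter_subset _ _ (Finset.mem_coe.1 hx)))
      have hcards : F0.card + F1.card = S.card := by
        rw [← hU]
        exact (Finset.card_union_of_disjoint (by
          rw [Finset.disjoint_left]
          intro x hx hx1
          have ha := h00 x hx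
          have hb := h11 x hx1
          have : (0:ℝ) = 1 := by rw [← ha, hb]
          norm_num at this)).symm
      rcases le_total F1.card F0.card with hle | hle
      · have hF0N : F0.card ≤ N := by
          have := Finset.card_pos.2 hne1
          omega
        exact branch i 0 (Or.inl rfl) S F0 F1 hU hcube h00
          (fun x hx => by rw [h11 x hx]; norm_num) hle hne0 hne1
          (ih F0 hF0N hF0sub hne0)
      · have hF1N : F1.card ≤ N := by
          have := Finset.card_pos.2 hne0
          omega
        have hU' : F1 ∪ F0 = S := by rw [Finset.union_comm]; exact hU
        exact branch i 1 (Or.inr rfl) S F1 F0 hU' hcube h11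
          (fun x hx => by rw [h00 x hx]; norm_num) hle hne1 hne0
          (ih F1 hF1N hF1sub hne1)
    · -- no splitting coordinate : S is a singleton
      push_neg at hsplit
      obtain ⟨x₀, hx₀⟩ := hne
      have hsing : S = {x₀} := by
        apply Finset.eq_singleton_iff_unique_mem.2
        refine ⟨hx₀, fun y hy => ?_⟩
        funext i
        by_contra hne'
        rcases hcube (Finset.mem_coe.2 hy) i with hy0 | hy0 <;>
          rcases hcube (Finset.mem_coe.2 hx₀) i with hx0 | hx0
        · exact hne' (by rw [hy0, hx0])
        · exact Finset.nonempty_iff_ne_empty.1 ⟨x₀, Finset.mem_filter.2 ⟨hx₀, hx0⟩⟩ (hsplit i ⟨y, Finset.mem_filter.2 ⟨hy, hy0⟩⟩)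
        · exact Finset.nonempty_iff_ne_empty.1 ⟨y, Finset.mem_filter.2 ⟨hy, hy0⟩⟩ (hsplit i ⟨x₀, Finset.mem_filter.2 ⟨hx₀, hx0⟩⟩)
        · exact hne' (by rw [hy0, hx0])
      have hcard1 : S.card = 1 := by rw [hsing]; exact Finset.card_singleton x₀
      have h2le : 2 ≤ (GS S).card := by rw [hsing]; exact base x₀
      have : logb 2 ((S.card : ℕ) : ℝ) = 0 := by
        rw [hcard1]; simp
      rw [this]
      have : (0:ℝ) < logb 2 ((GS S).card : ℝ) :=
        Real.logb_pos one_lt_two (by exact_mod_cast h2le)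
      linarith

theorem stmt14 (n : ℕ) (S : Finset (Fin n → ℝ)) (hS : (↑S : Set (Fin n → ℝ)) ⊆ cube n)
    (hne : S.Nonempty) :
    (1 / 16 : ℝ) * (Real.logb 2 S.card) ^ 2 < Cap (↑S : Set (Fin n → ℝ)) := by
  classical
  have hmain := main_s14 S.card S le_rfl hS hne
  haveI : Finite ↥(↑S : Set (Fin n → ℝ)) := S.finite_toSet.to_subtype
  have hfinthr : (thrFun (↑S : Set (Fin n → ℝ))).Finite := Set.toFinite _
  set f : Finset (Fin n → ℝ) → (↥(↑S : Set (Fin n → ℝ)) → Bool) :=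
    fun A => fun x => decide ((x : Fin n → ℝ) ∈ A) with hf
  have hmaps : ∀ A ∈ (↑(GS S) : Set (Finset (Fin n → ℝ))), f A ∈ thrFun ↑S := by
    intro A hA
    obtain ⟨hAS, a, α, hpos, hneg, _⟩ := mem_GS.1 (Finset.mem_coe.1 hA)
    refine ⟨a, α, fun x => ?_⟩
    have hxS : (x : Fin n → ℝ) ∈ S := Finset.mem_coe.1 x.2
    constructor
    · intro h
      have hxA : (x : Fin n → ℝ) ∈ A := by simpa [hf] using h
      exact le_of_lt (hpos _ hxA)
    · intro h
      by_cases hxA : (x : Fin n → ℝ) ∈ A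
      · simp [hf, hxA]
      · exact absurd h (not_le.2 (hneg _ (Finset.mem_sdiff.2 ⟨hxS, hxA⟩)))
  have hinj : Set.InjOn f ↑(GS S) := by
    intro A hA B hB hAB
    have hAS := (mem_GS.1 (Finset.mem_coe.1 hA)).1
    have hBS := (mem_GS.1 (Finset.mem_coe.1 hB)).1
    ext z
    constructor
    · intro hz
      have hzS : z ∈ S := hAS hz
      have := congrFun hAB ⟨z, Finset.mem_coe.2 hzS⟩
      simp only [hf, decide_eq_decide] at this
      exact this.1 hz
    · intro hz
      have hzS : z ∈ S := hBS hz
      have := congrFun hAB ⟨z, Finset.mem_coe.2 hzS⟩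
      simp only [hf, decide_eq_decide] at this
      exact this.2 hz
  have hcardle : (GS S).card ≤ Nat.card ↥(thrFun (↑S : Set (Fin n → ℝ))) := by
    rw [Nat.card_coe_set_eq, ← Set.ncard_coe_finset (GS S)]
    exact Set.ncard_le_ncard_of_injOn f hmaps hinj hfinthr
  have hGSpos : 1 ≤ (GS S).card := by
    by_contra h
    have h0 : (GS S).card = 0 := by omega
    rw [h0] at hmain
    have : (0:ℝ) ≤ (1/16 : ℝ) * (logb 2 S.card)^2 := by positivity
    simp only [Nat.cast_zero, Real.logb_zero] at hmain
    linarith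
  have hlast : logb 2 ((GS S).card : ℝ) ≤ Cap (↑S : Set (Fin n → ℝ)) := by
    show logb 2 ((GS S).card : ℝ) ≤ Real.logb 2 (Nat.card ↥(thrFun (↑S : Set (Fin n → ℝ))))
    apply Real.logb_le_logb_of_le one_lt_two (by exact_mod_cast hGSpos)
    exact_mod_cast hcardle
  linarith
end

section
/- Let n ≥ 4 and m be positive integers with 4n ≤ m ≤ 2^{n/2}. Then there exist integers n₀ ∈ [n/2, n], m₀ ∈ [m/8, m/2], and k ∈ [2, n/2] such that n₀/k = m₀/2^k, i.e., n₀ · 2^k = m₀ · k. -/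
theorem stmt18 (n m : ℕ) (hn : 4 ≤ n) (hm1 : 4 * n ≤ m)
    (hm2 : (m : ℝ) ≤ (2 : ℝ) ^ ((n : ℝ) / 2)) :
    ∃ n₀ m₀ k : ℕ,
      (n : ℝ) / 2 ≤ n₀ ∧ n₀ ≤ n ∧
      (m : ℝ) / 8 ≤ m₀ ∧ (m₀ : ℝ) ≤ (m : ℝ) / 2 ∧
      2 ≤ k ∧ (k : ℝ) ≤ (n : ℝ) / 2 ∧
      n₀ * 2 ^ k = m₀ * k := by
  set k₀ := n / 2 with hk₀
  have hk₀2 : 2 ≤ k₀ := by omega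
  have hk₀n : 2 * k₀ ≤ n := by omega
  -- m ≤ 2 ^ (k₀ + 1)
  have hm3 : m ≤ 2 ^ (k₀ + 1) := by
    have h1 : (n : ℝ) / 2 ≤ ((k₀ : ℕ) : ℝ) + 1 := by
      have : n ≤ 2 * k₀ + 2 := by omega
      have := (Nat.cast_le (α := ℝ)).2 this
      push_cast at this
      linarith
    have h2 : (2 : ℝ) ^ ((n : ℝ) / 2) ≤ (2 : ℝ) ^ (((k₀ : ℝ)) + 1) :=
      Real.rpow_le_rpow_of_exponent_le (by norm_num) h1
    have h3 : (2 : ℝ) ^ (((k₀ : ℝ)) + 1) = ((2 ^ (k₀ + 1) : ℕ) : ℝ) := by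
      rw [show ((k₀ : ℝ)) + 1 = ((k₀ + 1 : ℕ) : ℝ) by push_cast; ring,
        Real.rpow_natCast]
      push_cast; ring
    have : (m : ℝ) ≤ ((2 ^ (k₀ + 1) : ℕ) : ℝ) := by
      rw [← h3]; linarith
    exact_mod_cast this
  have hP : ∃ k, 2 ≤ k ∧ m * k ≤ 4 * n * 2 ^ k := by
    refine ⟨k₀, hk₀2, ?_⟩
    calc m * k₀ ≤ 2 ^ (k₀ + 1) * k₀ := Nat.mul_le_mul_right _ hm3
      _ = 2 ^ k₀ * (2 * k₀) := by ring
      _ ≤ 2 ^ k₀ * (4 * n) := Nat.mul_le_mul_left _ (by omega)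
      _ = 4 * n * 2 ^ k₀ := by ring
  classical
  set k := Nat.find hP with hkdef
  obtain ⟨hk2, hkle⟩ := Nat.find_spec hP
  have hkk₀ : k ≤ k₀ := Nat.find_min' hP ⟨hk₀2, by
    calc m * k₀ ≤ 2 ^ (k₀ + 1) * k₀ := Nat.mul_le_mul_right _ hm3
      _ = 2 ^ k₀ * (2 * k₀) := by ring
      _ ≤ 2 ^ k₀ * (4 * n) := Nat.mul_le_mul_left _ (by omega)
      _ = 4 * n * 2 ^ k₀ := by ring⟩
  have hkpos : 0 < k := by omega
  have h2kn : 2 * k ≤ n := by omega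
  set q := n / k with hq
  have hmod : n % k + k * q = n := Nat.mod_add_div n k
  have hmodlt : n % k < k := Nat.mod_lt _ hkpos
  have htle : k * q ≤ n := by omega
  have htgt : n < k * q + k := by omega
  -- 2 * (k * q) > n
  have h2t : n < 2 * (k * q) := by omega
  refine ⟨k * q, q * 2 ^ k, k, ?_, ?_, ?_, ?_, hk2, ?_, by ring⟩
  · rw [div_le_iff₀ (by norm_num)]
    have : (n : ℝ) ≤ ((2 * (k * q) : ℕ) : ℝ) := Nat.cast_le.2 (le_of_lt h2t)
    push_cast at this ⊢
    linarith
  · exact_mod_cast Nat.cast_le.2 htle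
  · -- m ≤ 8 * m₀
    have key : m * k ≤ 8 * (q * 2 ^ k) * k := by
      calc m * k ≤ 4 * n * 2 ^ k := hkle
        _ ≤ 4 * (2 * (k * q)) * 2 ^ k := by
            have := le_of_lt h2t
            exact Nat.mul_le_mul_right _ (Nat.mul_le_mul_left _ this)
        _ = 8 * (q * 2 ^ k) * k := by ring
    have hm8 : m ≤ 8 * (q * 2 ^ k) := Nat.le_of_mul_le_mul_right key hkpos
    rw [div_le_iff₀ (by norm_num)]
    have := (Nat.cast_le (α := ℝ)).2 hm8
    push_cast at this ⊢
    linarith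
  · -- 2 * m₀ ≤ m
    have hup : 2 * (q * 2 ^ k) ≤ m := by
      rcases eq_or_lt_of_le hk2 with h | h
      · -- k = 2
        have hkeq : k = 2 := by omega
        have hq2 : q = n / 2 := by rw [hq, hkeq]
        have : 2 * (q * 2 ^ k) = 8 * (n / 2) := by rw [hq2, hkeq]; ring
        omega
      · -- k ≥ 3, use minimality at k - 1
        have hmin := Nat.find_min hP (show k - 1 < k by omega)
        push_neg at hmin
        have h1 : 4 * n * 2 ^ (k - 1) < m * (k - 1) := hmin (by omega)
        have h2 : 2 * (q * 2 ^ k) * k ≤ 2 * n * 2 ^ k := by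
          calc 2 * (q * 2 ^ k) * k = 2 * (k * q) * 2 ^ k := by ring
            _ ≤ 2 * n * 2 ^ k := by
                exact Nat.mul_le_mul_right _ (Nat.mul_le_mul_left _ htle)
        obtain ⟨j, hj⟩ : ∃ j, k = j + 1 := ⟨k - 1, by omega⟩
        have hj1 : k - 1 = j := by omega
        rw [hj1] at h1
        have h3 : 2 * n * 2 ^ k = 4 * n * 2 ^ j := by rw [hj]; ring
        have h4 : 2 * (q * 2 ^ k) * k < m * k := by
          calc 2 * (q * 2 ^ k) * k ≤ 4 * n * 2 ^ j := by omega
            _ < m * j := h1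
            _ ≤ m * k := Nat.mul_le_mul_left _ (by omega)
        exact le_of_lt (Nat.lt_of_mul_lt_mul_right h4)
    rw [le_div_iff₀ (by norm_num)]
    have := (Nat.cast_le (α := ℝ)).2 hup
    push_cast at this ⊢
    linarith
  · rw [le_div_iff₀ (by norm_num)]
    have := (Nat.cast_le (α := ℝ)).2 h2kn
    push_cast at this ⊢
    linarith
end
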